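/- arXiv:1905.02287 — 4 statements merged into one kernel-verified Lean document; each statement's English description precedes it below -/
import Mathlib

section
/- Let M be a loopless matroid on ground set [n] of rank at least 2 that is irreducible under matroid union, let w ∈ ℝ^n with w_i > 0 for all i and with w not a constant multiple of the all-ones vector (i.e., w has at least two distinct entries), and let c > 0. Define v : 2^{[n]} → ℝ by v(∅) = 0 and v(S) = ρ^w(S) + c for all nonempty S ⊆ [n], where ρ^w is the weighted matroid rank valuation of M. Then v is a gross substitutes valuation on [n] and v is irreducible under merging. -/
open Finset

variable {α : Type*} [DecidableEq α]

/-- A valuation on ground set `E`: zero at the empty set, non-negative,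
and monotone on subsets of `E`. -/
def IsValuation (E : Finset α) (u : Finset α → ℝ) : Prop :=
  u ∅ = 0 ∧ (∀ S : Finset α, S ⊆ E → 0 ≤ u S) ∧
    ∀ ⦃S T : Finset α⦄, S ⊆ T → T ⊆ E → u S ≤ u T

/-- Gross substitutes valuation on ground set `E`: a valuation satisfying the
M♮-exchange property. -/
def GrossSubstitutes (E : Finset α) (u : Finset α → ℝ) : Prop :=
  IsValuation E u ∧
    ∀ ⦃S T : Finset α⦄, S ⊆ E → T ⊆ E → ∀ i ∈ S \ T,
      u S + u T ≤ u (S.erase i) + u (insert i T) ∨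
        ∃ j ∈ T \ S,
          u S + u T ≤ u (insert j (S.erase i)) + u ((insert i T).erase j)

/-- The merge (convolution) of a valuation `u1` on `E1` and `u2` on `E2`:
`(u1 * u2)(S) = max { u1 S1 + u2 S2 : S = S1 ∪ S2, S1 ∩ S2 = ∅, S1 ⊆ E1, S2 ⊆ E2 }`. -/
noncomputable def mergeVal (E1 E2 : Finset α) (u1 u2 : Finset α → ℝ)
    (S : Finset α) : ℝ :=
  sSup {x : ℝ | ∃ S1 S2 : Finset α, S = S1 ∪ S2 ∧ Disjoint S1 S2 ∧
    S1 ⊆ E1 ∧ S2 ⊆ E2 ∧ x = u1 S1 + u2 S2}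

/-- A (finite) matroid with ground set `E`, given by its independent sets. -/
structure FinMatroid (α : Type*) [DecidableEq α] where
  E : Finset α
  Indep : Finset α → Prop
  indep_empty : Indep ∅
  indep_subset : ∀ ⦃I J : Finset α⦄, Indep J → I ⊆ J → Indep I
  indep_aug : ∀ ⦃I J : Finset α⦄, Indep I → Indep J → I.card < J.card →
    ∃ e ∈ J, e ∉ I ∧ Indep (insert e I)
  subset_ground : ∀ ⦃I : Finset α⦄, Indep I → I ⊆ E

/-- The weighted matroid rank valuation:
`ρ^w(T) = max { ∑_{i ∈ I} w i : I independent, I ⊆ T }`. -/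
noncomputable def weightedRank (M : FinMatroid α) (w : α → ℝ) (T : Finset α) : ℝ :=
  sSup {x : ℝ | ∃ I : Finset α, M.Indep I ∧ I ⊆ T ∧ x = ∑ i ∈ I, w i}

/-- `M` is the matroid union of `M1` and `M2`. -/
def IsMatroidUnion (M M1 M2 : FinMatroid α) : Prop :=
  M.E = M1.E ∪ M2.E ∧
    ∀ I : Finset α, M.Indep I ↔
      ∃ I1 I2 : Finset α, M1.Indep I1 ∧ M2.Indep I2 ∧ I = I1 ∪ I2

/-- A matroid is irreducible under matroid union if whenever it is a union of
two matroids, one of them equals the matroid itself. -/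
def MatroidIrreducible (M : FinMatroid α) : Prop :=
  ∀ M1 M2 : FinMatroid α, IsMatroidUnion M M1 M2 → M1 = M ∨ M2 = M

/-- A valuation with ground set the full set `[n]` is irreducible under merging
if whenever it is the merge of two gross substitutes valuations whose ground
sets cover `[n]`, it equals one of them. -/
def IrreducibleVal [Fintype α] (v : Finset α → ℝ) : Prop :=
  ∀ (E1 E2 : Finset α) (u1 u2 : Finset α → ℝ),
    GrossSubstitutes E1 u1 → GrossSubstitutes E2 u2 → E1 ∪ E2 = Finset.univ →
    v = mergeVal E1 E2 u1 u2 → v = u1 ∨ v = u2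

namespace FinMatroid

variable (M : FinMatroid α) (w : α → ℝ)

lemma rank_set_eq (T : Finset α) :
    letI := Classical.decPred M.Indep
    {x : ℝ | ∃ I : Finset α, M.Indep I ∧ I ⊆ T ∧ x = ∑ i ∈ I, w i} =
      ↑((T.powerset.filter (fun I => M.Indep I)).image (fun I => ∑ i ∈ I, w i)) := by
  letI := Classical.decPred M.Indep
  ext x
  simp only [Set.mem_setOf_eq, coe_image, Set.mem_image, mem_coe, mem_filter, mem_powerset]
  constructor
  · rintro ⟨I, h1, h2, rfl⟩; exact ⟨I, ⟨h2, h1⟩, rfl⟩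
  · rintro ⟨I, ⟨h2, h1⟩, rfl⟩; exact ⟨I, h1, h2, rfl⟩

lemma le_rank {I T : Finset α} (hI : M.Indep I) (hsub : I ⊆ T) :
    ∑ i ∈ I, w i ≤ weightedRank M w T := by
  letI := Classical.decPred M.Indep
  apply le_csSup
  · rw [rank_set_eq M w T]; exact Finset.bddAbove _
  · exact ⟨I, hI, hsub, rfl⟩

lemma rank_attain (T : Finset α) :
    ∃ I : Finset α, M.Indep I ∧ I ⊆ T ∧ weightedRank M w T = ∑ i ∈ I, w i := by
  letI := Classical.decPred M.Indep
  have hne : {x : ℝ | ∃ I : Finset α, M.Indep I ∧ I ⊆ T ∧ x = ∑ i ∈ I, w i}.Nonempty :=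
    ⟨∑ i ∈ (∅ : Finset α), w i, ∅, M.indep_empty, empty_subset _, rfl⟩
  have hfin : {x : ℝ | ∃ I : Finset α, M.Indep I ∧ I ⊆ T ∧ x = ∑ i ∈ I, w i}.Finite := by
    rw [rank_set_eq M w T]; exact Finset.finite_toSet _
  have := hne.csSup_mem hfin
  exact this

lemma rank_le_of_forall {T : Finset α} {x : ℝ}
    (h : ∀ I, M.Indep I → I ⊆ T → ∑ i ∈ I, w i ≤ x) : weightedRank M w T ≤ x := by
  obtain ⟨I, hI, hsub, heq⟩ := rank_attain M w T
  rw [heq]; exact h I hI hsub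

lemma rank_nonneg (T : Finset α) : 0 ≤ weightedRank M w T := by
  have := le_rank M w M.indep_empty (empty_subset T)
  simpa using this

lemma rank_mono {S T : Finset α} (h : S ⊆ T) :
    weightedRank M w S ≤ weightedRank M w T := by
  apply rank_le_of_forall
  intro I hI hsub
  exact le_rank M w hI (hsub.trans h)

lemma rank_le_sum (hw : ∀ i, 0 ≤ w i) (T : Finset α) :
    weightedRank M w T ≤ ∑ i ∈ T, w i := by
  apply rank_le_of_forall
  intro I hI hsub
  exact Finset.sum_le_sum_of_subset_of_nonneg hsub (fun i _ _ => hw i)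

lemma rank_indep_eq (hw : ∀ i, 0 ≤ w i) {T : Finset α} (hT : M.Indep T) :
    weightedRank M w T = ∑ i ∈ T, w i :=
  le_antisymm (rank_le_sum M w hw T) (le_rank M w hT subset_rfl)

lemma indep_of_rank_eq (hw : ∀ i, 0 < w i) {T : Finset α}
    (h : ∑ i ∈ T, w i ≤ weightedRank M w T) : M.Indep T := by
  obtain ⟨I, hI, hsub, heq⟩ := rank_attain M w T
  have hIT : I = T := by
    by_contra hne
    have hss : I ⊂ T := hsub.ssubset_of_ne hne
    obtain ⟨t, htT, htI⟩ := exists_of_ssubset hss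
    have h2 : ∑ i ∈ T, w i ≤ ∑ i ∈ I, w i := by rw [← heq]; exact h
    have hlt : ∑ i ∈ I, w i < ∑ i ∈ T, w i := by
      apply Finset.sum_lt_sum_of_subset hsub htT htI (hw t)
      intro i _ _; exact (hw i).le
    linarith
  rwa [hIT] at hI

lemma rank_insert_le (hw : ∀ i, 0 ≤ w i) (T : Finset α) (b : α) :
    weightedRank M w (insert b T) ≤ weightedRank M w T + w b := by
  apply rank_le_of_forall
  intro I hI hsub
  by_cases hb : b ∈ I
  · have h1 : I.erase b ⊆ T := by
      intro x hx
      have := hsub (mem_of_mem_erase hx)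
      rcases mem_insert.mp this with h | h
      · exact absurd h (ne_of_mem_erase hx)
      · exact h
    have h2 : ∑ i ∈ I.erase b, w i ≤ weightedRank M w T :=
      le_rank M w (M.indep_subset hI (erase_subset _ _)) h1
    have h3 : ∑ i ∈ I.erase b, w i = (∑ i ∈ I, w i) - w b :=
      Finset.sum_erase_eq_sub hb
    linarith
  · have h1 : I ⊆ T := by
      intro x hx
      rcases mem_insert.mp (hsub hx) with h | h
      · subst h; exact absurd hx hb
      · exact h
    have := le_rank M w hI h1
    have := hw b
    linarith

lemma rank_singleton (hw : ∀ i, 0 ≤ w i) {i : α} (h : M.Indep {i}) :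
    weightedRank M w {i} = w i := by
  have := rank_indep_eq M w hw h
  simpa using this

lemma rank_pos (hw : ∀ i, 0 < w i) {T : Finset α} (hT : T.Nonempty)
    (hloop : ∀ i ∈ T, M.Indep {i}) : 0 < weightedRank M w T := by
  obtain ⟨t, ht⟩ := hT
  have h1 : ∑ i ∈ ({t} : Finset α), w i ≤ weightedRank M w T :=
    le_rank M w (hloop t ht) (singleton_subset_iff.mpr ht)
  simp only [sum_singleton] at h1
  linarith [hw t]

lemma attain_nonempty (hw : ∀ i, 0 < w i) {T I : Finset α} (hT : T.Nonempty)
    (hloop : ∀ i ∈ T, M.Indep {i})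
    (heq : weightedRank M w T = ∑ i ∈ I, w i) : I.Nonempty := by
  rcases I.eq_empty_or_nonempty with rfl | h
  · exfalso
    have := rank_pos M w hw hT hloop
    rw [heq] at this; simp at this
  · exact h

/-- Maximal independent extension inside `X`. -/
lemma exists_maximal_indep_aux (X : Finset α) :
    ∀ (n : ℕ) (I : Finset α), (X \ I).card = n → M.Indep I → I ⊆ X →
    ∃ B : Finset α, M.Indep B ∧ I ⊆ B ∧ B ⊆ X ∧
      ∀ e ∈ X, e ∉ B → ¬ M.Indep (insert e B) := by
  intro n
  induction n using Nat.strong_induction_on with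
  | _ n ih =>
    intro I hn hI hIX
    by_cases h : ∃ e ∈ X, e ∉ I ∧ M.Indep (insert e I)
    · obtain ⟨e, heX, heI, hind⟩ := h
      have hcard : (X \ insert e I).card < n := by
        rw [← hn]
        have : X \ insert e I = (X \ I).erase e := by
          ext x; simp [mem_sdiff, mem_erase, mem_insert]; tauto
        rw [this]
        exact card_erase_lt_of_mem (mem_sdiff.mpr ⟨heX, heI⟩)
      obtain ⟨B, h1, h2, h3, h4⟩ := ih _ hcard (insert e I) rfl hind
        (insert_subset heX hIX)
      exact ⟨B, h1, (subset_insert e I).trans h2, h3, h4⟩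
    · push_neg at h
      exact ⟨I, hI, subset_rfl, hIX, h⟩

lemma exists_maximal_indep (X : Finset α) (I : Finset α) (hI : M.Indep I) (hIX : I ⊆ X) :
    ∃ B : Finset α, M.Indep B ∧ I ⊆ B ∧ B ⊆ X ∧
      ∀ e ∈ X, e ∉ B → ¬ M.Indep (insert e B) :=
  exists_maximal_indep_aux M X _ I rfl hI hIX

/-- A maximal independent subset of `X` has maximum cardinality. -/
lemma card_le_of_maximal {X B K : Finset α} (hB : M.Indep B) (hBX : B ⊆ X)
    (hmax : ∀ e ∈ X, e ∉ B → ¬ M.Indep (insert e B))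
    (hK : M.Indep K) (hKX : K ⊆ X) : K.card ≤ B.card := by
  by_contra h
  push_neg at h
  obtain ⟨e, heK, heB, hind⟩ := M.indep_aug hB hK h
  exact hmax e (hKX heK) heB hind

/-- Symmetric exchange for independent sets. -/
lemma exchange {I J : Finset α} (i : α) (hI : M.Indep I) (hJ : M.Indep J)
    (hiI : i ∈ I) (hiJ : i ∉ J) (hdep : ¬ M.Indep (insert i J)) :
    ∃ j ∈ J, j ∉ I ∧ M.Indep (insert j (I.erase i)) ∧
      M.Indep (insert i (J.erase j)) := by
  classical
  set Z : Finset α := J.filter (fun j => M.Indep (insert i (J.erase j))) with hZdef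
  have hZJ : Z ⊆ J := filter_subset _ _
  have hZindep : M.Indep Z := M.indep_subset hJ hZJ
  have hiZ : i ∉ Z := fun h => hiJ (hZJ h)
  -- J is maximal independent in insert i J
  have hJmax : ∀ e ∈ insert i J, e ∉ J → ¬ M.Indep (insert e J) := by
    intro e he heJ
    rcases mem_insert.mp he with rfl | h
    · exact hdep
    · exact absurd h heJ
  -- Claim: insert i Z is dependent
  have hZdep : ¬ M.Indep (insert i Z) := by
    intro hindep
    obtain ⟨B, hB, hZB, hBX, hBmax⟩ :=
      exists_maximal_indep M (insert i J) (insert i Z) hindep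
        (insert_subset_insert _ hZJ)
    have hiB : i ∈ B := hZB (mem_insert_self _ _)
    have hcard1 : B.card ≤ J.card := card_le_of_maximal M hJ (subset_insert _ _) hJmax hB hBX
    have hcard2 : J.card ≤ B.card := card_le_of_maximal M hB hBX hBmax hJ (subset_insert _ _)
    have hBi : B.erase i ⊆ J := by
      intro x hx
      have hxB := mem_of_mem_erase hx
      rcases mem_insert.mp (hBX hxB) with h | h
      · exact absurd h (ne_of_mem_erase hx)
      · exact h
    have hB1 : 0 < B.card := card_pos.mpr ⟨i, hiB⟩
    have hcard3 : (J \ B.erase i).card = 1 := by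
      rw [card_sdiff_of_subset hBi, card_erase_of_mem hiB]
      omega
    obtain ⟨j₁, hj₁⟩ := card_eq_one.mp hcard3
    have hj₁J : j₁ ∈ J := by
      have : j₁ ∈ J \ B.erase i := hj₁ ▸ mem_singleton_self j₁
      exact (mem_sdiff.mp this).1
    have hsub : insert i (J.erase j₁) ⊆ B := by
      intro x hx
      rcases mem_insert.mp hx with rfl | hx2
      · exact hiB
      · have hxJ : x ∈ J := mem_of_mem_erase hx2
        have hxne : x ≠ j₁ := ne_of_mem_erase hx2
        by_cases hxB : x ∈ B.erase i
        · exact mem_of_mem_erase hxB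
        · exfalso
          have : x ∈ J \ B.erase i := mem_sdiff.mpr ⟨hxJ, hxB⟩
          rw [hj₁] at this
          exact hxne (mem_singleton.mp this)
    have hj₁Z : j₁ ∈ Z := by
      rw [hZdef, mem_filter]
      exact ⟨hj₁J, M.indep_subset hB hsub⟩
    have hj₁B : j₁ ∈ B.erase i := by
      apply mem_erase.mpr
      constructor
      · intro h; exact hiJ (h ▸ hj₁J)
      · exact hZB (mem_insert.mpr (Or.inr hj₁Z))
    have : j₁ ∈ J \ B.erase i := hj₁ ▸ mem_singleton_self j₁
    exact (mem_sdiff.mp this).2 hj₁B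
  -- Claim: some j ∈ Z works for I as well
  by_contra hcon
  push_neg at hcon
  have hbad : ∀ j ∈ Z, j ∉ I.erase i → ¬ M.Indep (insert j (I.erase i)) := by
    intro j hjZ hjIe
    have hjJ := hZJ hjZ
    have hjne : j ≠ i := fun h => hiJ (h ▸ hjJ)
    by_cases hjI : j ∈ I
    · exact absurd (mem_erase.mpr ⟨hjne, hjI⟩) hjIe
    · intro hind
      rw [hZdef, mem_filter] at hjZ
      exact hcon j hjJ hjI hind hjZ.2
  set X : Finset α := (I.erase i) ∪ Z with hX
  have hIeX : I.erase i ⊆ X := subset_union_left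
  have hImax : ∀ e ∈ X, e ∉ I.erase i → ¬ M.Indep (insert e (I.erase i)) := by
    intro e heX heI
    rcases mem_union.mp heX with h | h
    · exact absurd h heI
    · exact hbad e h heI
  obtain ⟨B, hB, hZB, hBX, hBmax⟩ :=
    exists_maximal_indep M X Z hZindep subset_union_right
  have hiX : i ∉ X := by
    rw [hX, mem_union]
    rintro (h | h)
    · exact (mem_erase.mp h).1 rfl
    · exact hiZ h
  have hBmax' : ∀ e ∈ insert i X, e ∉ B → ¬ M.Indep (insert e B) := by
    intro e he heB
    rcases mem_insert.mp he with rfl | h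
    · intro hind
      exact hZdep (M.indep_subset hind (insert_subset_insert _ hZB))
    · exact hBmax e h heB
  have hIsub : I ⊆ insert i X := by
    intro x hx
    by_cases hxi : x = i
    · exact hxi ▸ mem_insert_self _ _
    · exact mem_insert.mpr (Or.inr (hIeX (mem_erase.mpr ⟨hxi, hx⟩)))
  have hc1 : I.card ≤ B.card :=
    card_le_of_maximal M hB (hBX.trans (subset_insert _ _)) hBmax' hI hIsub
  have hc2 : B.card ≤ (I.erase i).card :=
    card_le_of_maximal M (M.indep_subset hI (erase_subset _ _)) hIeX hImax hB hBX
  rw [card_erase_of_mem hiI] at hc2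
  have : 0 < I.card := card_pos.mpr ⟨i, hiI⟩
  omega

end FinMatroid
namespace GrossSubstitutes

variable {E : Finset α} {u : Finset α → ℝ}

lemma sub_lemma (hgs : GrossSubstitutes E u) {S : Finset α} (hS : S ⊆ E)
    {i : α} (hi : i ∈ S) : u S ≤ u (S.erase i) + u {i} := by
  have h := hgs.2 hS (empty_subset E) i (mem_sdiff.mpr ⟨hi, notMem_empty i⟩)
  rcases h with h | ⟨j, hj, _⟩
  · rw [hgs.1.1] at h
    simpa using h
  · exact absurd (mem_sdiff.mp hj).1 (notMem_empty j)

lemma submod1 (hgs : GrossSubstitutes E u) {X : Finset α} (hX : X ⊆ E)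
    {x z : α} (hxE : x ∈ E) (hzE : z ∈ E) (hx : x ∉ X) (hz : z ∉ X) (hxz : x ≠ z) :
    u (insert x (insert z X)) + u X ≤ u (insert z X) + u (insert x X) := by
  have hS : insert x (insert z X) ⊆ E := insert_subset hxE (insert_subset hzE hX)
  have hi : x ∈ insert x (insert z X) \ X := by
    simp [mem_sdiff, hx]
  have h := hgs.2 hS hX x hi
  rcases h with h | ⟨j, hj, _⟩
  · have herase : (insert x (insert z X)).erase x = insert z X := by
      apply erase_insert
      simp [hx, hxz]
    rwa [herase] at h
  · exfalso
    have := mem_sdiff.mp hj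
    exact this.2 (mem_insert.mpr (Or.inr (mem_insert.mpr (Or.inr this.1))))

/-- Pair marginal bound: `u B - u (B.erase x) ≤ u {x,y} - u {y}` for `x y ∈ B`. -/
lemma marginal_pair (hgs : GrossSubstitutes E u) :
    ∀ (n : ℕ) (B : Finset α), B.card = n → B ⊆ E → ∀ {x y : α}, x ∈ B → y ∈ B → x ≠ y →
    u B + u {y} ≤ u (B.erase x) + u {x, y} := by
  intro n
  induction n using Nat.strong_induction_on with
  | _ n ih =>
    intro B hn hB x y hx hy hxy
    by_cases hBxy : B = {x, y}
    · subst hBxy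
      have h1 : ({x, y} : Finset α).erase x = {y} := by
        rw [show ({x,y} : Finset α) = insert x {y} from rfl]
        apply erase_insert
        simp [hxy]
      rw [h1]
      linarith
    · -- there is z ∈ B, z ≠ x, z ≠ y
      have hxyB : ({x, y} : Finset α) ⊆ B := by
        intro t ht
        rcases mem_insert.mp ht with rfl | ht
        · exact hx
        · exact (mem_singleton.mp ht) ▸ hy
      obtain ⟨z, hzB, hz⟩ : ∃ z ∈ B, z ∉ ({x, y} : Finset α) := by
        by_contra hcon
        push_neg at hcon
        exact hBxy (subset_antisymm hcon hxyB)
      have hzx : z ≠ x := fun h => hz (h ▸ mem_insert_self _ _)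
      have hzy : z ≠ y := fun h => hz (by simp [h])
      -- submod1 with X := B \ {x, z}
      have hkey : u B + u ((B.erase x).erase z) ≤ u (B.erase x) + u (B.erase z) := by
        have hXsub : (B.erase x).erase z ⊆ E := ((erase_subset _ _).trans (erase_subset _ _)).trans hB
        have h1 : insert x (insert z ((B.erase x).erase z)) = B := by
          rw [insert_erase (mem_erase.mpr ⟨hzx, hzB⟩)]
          rw [insert_erase hx]
        have h2 : insert z ((B.erase x).erase z) = B.erase x := by
          rw [insert_erase (mem_erase.mpr ⟨hzx, hzB⟩)]
        have h3 : insert x ((B.erase x).erase z) = B.erase z := by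
          rw [erase_right_comm]
          rw [insert_erase (mem_erase.mpr ⟨hzx.symm, hx⟩)]
        have := submod1 hgs hXsub (hB hx) (hB hzB)
          (fun h => (mem_erase.mp (mem_erase.mp h).2).1 rfl)
          (fun h => (mem_erase.mp h).1 rfl) hzx.symm
        rw [h1, h2, h3] at this
        exact this
      have hIH : u (B.erase z) + u {y} ≤ u ((B.erase z).erase x) + u {x, y} := by
        apply ih (B.erase z).card _ _ rfl ((erase_subset _ _).trans hB)
          (mem_erase.mpr ⟨hzx.symm, hx⟩)
          (mem_erase.mpr ⟨fun h => hzy h.symm, hy⟩) hxy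
        rw [← hn]
        exact card_erase_lt_of_mem hzB
      have heq : (B.erase z).erase x = (B.erase x).erase z := by
        rw [erase_right_comm]
      rw [heq] at hIH
      linarith
end GrossSubstitutes
section PartOne
variable [Fintype α] (M : FinMatroid α) (w : α → ℝ)

open FinMatroid

theorem gs_of_shifted_rank (hw : ∀ i, 0 < w i) (hloop : ∀ i : α, M.Indep {i})
    (c : ℝ) (hc : 0 < c) :
    GrossSubstitutes (univ : Finset α)
      (fun S => if S = ∅ then 0 else weightedRank M w S + c) := by
  have hw' : ∀ i, 0 ≤ w i := fun i => (hw i).le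
  set ρ := weightedRank M w with hρ
  set v : Finset α → ℝ := fun S => if S = ∅ then 0 else ρ S + c with hv
  have hv0 : v ∅ = 0 := if_pos rfl
  have hvne : ∀ S : Finset α, S ≠ ∅ → v S = ρ S + c := fun S h => if_neg h
  constructor
  · refine ⟨hv0, ?_, ?_⟩
    · intro S _
      by_cases h : S = ∅
      · rw [h, hv0]
      · rw [hvne S h]
        have := rank_nonneg M w S
        linarith
    · intro S T hST _
      by_cases hS : S = ∅
      · rw [hS, hv0]
        by_cases hT : T = ∅
        · rw [hT, hv0]
        · rw [hvne T hT]; have := rank_nonneg M w T; linarith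
      · have hT : T ≠ ∅ := by
          intro h; subst h; exact hS (subset_empty.mp hST)
        rw [hvne S hS, hvne T hT]
        have := rank_mono M w hST
        linarith
  · intro S T _ _ i hiST
    obtain ⟨hiS, hiT⟩ := mem_sdiff.mp hiST
    have hSne : S ≠ ∅ := ne_empty_of_mem hiS
    have hrsing : ∀ a : α, ρ {a} = w a := fun a => rank_singleton M w hw' (hloop a)
    by_cases hT : T = ∅
    · -- Case A
      subst hT
      left
      rw [hv0, hvne S hSne]
      have hins : (insert i (∅ : Finset α)) = {i} := rfl
      rw [hins, hvne {i} (by simp)]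
      rw [hrsing i]
      by_cases hSi : S.erase i = ∅
      · have hSeq : S = {i} := by
          apply subset_antisymm
          · intro x hx
            by_contra hxi
            exact (notMem_empty x) (hSi ▸ mem_erase.mpr ⟨fun h => hxi (by simp [h]), hx⟩)
          · simp [hiS]
        rw [hSi, hv0, hSeq, hrsing i]; linarith
      · rw [hvne _ hSi]
        obtain ⟨I, hI, hIS, hIeq⟩ := rank_attain M w S
        by_cases hiI : i ∈ I
        · have h1 : ∑ x ∈ I.erase i, w x ≤ ρ (S.erase i) :=
            le_rank M w (M.indep_subset hI (erase_subset _ _)) (erase_subset_erase _ hIS)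
          have h2 : ∑ x ∈ I.erase i, w x = (∑ x ∈ I, w x) - w i :=
            Finset.sum_erase_eq_sub hiI
          rw [← hρ] at hIeq
          linarith
        · have hIsub : I ⊆ S.erase i := by
            intro x hx
            exact mem_erase.mpr ⟨fun h => hiI (h ▸ hx), hIS hx⟩
          have h1 : ∑ x ∈ I, w x ≤ ρ (S.erase i) := le_rank M w hI hIsub
          rw [← hρ] at hIeq
          have := hw i
          linarith
    · -- Case B : T ≠ ∅
      have hTne : T.Nonempty := nonempty_iff_ne_empty.mpr hT
      obtain ⟨I, hI, hIS, hIeq⟩ := rank_attain M w S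
      obtain ⟨J, hJ, hJT, hJeq⟩ := rank_attain M w T
      have hJne : J.Nonempty :=
        attain_nonempty M w hw hTne (fun a _ => hloop a) hJeq
      have hiJ : i ∉ J := fun h => hiT (hJT h)
      have hiTins : insert i T ≠ ∅ := insert_ne_empty _ _
      rw [← hρ] at hIeq hJeq
      by_cases hiI : i ∈ I
      · by_cases hJi : M.Indep (insert i J)
        · -- B2
          by_cases hSi : S.erase i = ∅
          · -- S = {i}, use swap branch
            right
            obtain ⟨j, hjJ⟩ := hJne
            have hjT : j ∈ T := hJT hjJ
            have hji : j ≠ i := fun h => hiT (h ▸ hjT)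
            have hjS : j ∉ S := by
              intro hjS
              exact (notMem_empty j) (hSi ▸ mem_erase.mpr ⟨hji, hjS⟩)
            refine ⟨j, mem_sdiff.mpr ⟨hjT, hjS⟩, ?_⟩
            have h1 : insert j (S.erase i) = {j} := by rw [hSi]; rfl
            rw [h1, hvne {j} (by simp), hrsing j]
            have h2 : (insert i T).erase j ≠ ∅ := by
              intro h
              have : i ∈ (insert i T).erase j :=
                mem_erase.mpr ⟨fun hh => hji hh.symm, mem_insert_self _ _⟩
              rw [h] at this; exact notMem_empty i this
            rw [hvne _ h2, hvne S hSne, hvne T hT]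
            -- ρ S = w i
            have hSeq : S = {i} := by
              apply subset_antisymm
              · intro x hx
                by_contra hxi
                exact (notMem_empty x) (hSi ▸ mem_erase.mpr ⟨fun h => hxi (by simp [h]), hx⟩)
              · simp [hiS]
            have hρS : ρ S = w i := by rw [hSeq]; exact hrsing i
            -- lower bound for ρ ((insert i T).erase j)
            have hindep : M.Indep (insert i (J.erase j)) :=
              M.indep_subset hJi (insert_subset_insert _ (erase_subset _ _))
            have hsub : insert i (J.erase j) ⊆ (insert i T).erase j := by
              intro x hx
              rcases mem_insert.mp hx with rfl | hx2
              · exact mem_erase.mpr ⟨fun hh => hji hh.symm, mem_insert_self _ _⟩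
              · exact mem_erase.mpr ⟨(mem_erase.mp hx2).1,
                  mem_insert.mpr (Or.inr (hJT (mem_of_mem_erase hx2)))⟩
            have h3 : ∑ x ∈ insert i (J.erase j), w x ≤ ρ ((insert i T).erase j) :=
              le_rank M w hindep hsub
            have h4 : ∑ x ∈ insert i (J.erase j), w x
                = w i + ((∑ x ∈ J, w x) - w j) := by
              rw [sum_insert (fun h => hiJ (mem_of_mem_erase h)),
                Finset.sum_erase_eq_sub hjJ]
            rw [h4] at h3
            linarith
          · -- branch 1
            left
            rw [hvne S hSne, hvne T hT, hvne _ hSi, hvne _ hiTins]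
            have h1 : ∑ x ∈ I.erase i, w x ≤ ρ (S.erase i) :=
              le_rank M w (M.indep_subset hI (erase_subset _ _)) (erase_subset_erase _ hIS)
            have h2 : ∑ x ∈ I.erase i, w x = (∑ x ∈ I, w x) - w i :=
              Finset.sum_erase_eq_sub hiI
            have h3 : ∑ x ∈ insert i J, w x ≤ ρ (insert i T) :=
              le_rank M w hJi (insert_subset_insert _ hJT)
            have h4 : ∑ x ∈ insert i J, w x = w i + ∑ x ∈ J, w x := sum_insert hiJ
            linarith
        · -- B3 : exchange
          obtain ⟨j, hjJ, hjI, hindep1, hindep2⟩ :=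
            exchange M i hI hJ hiI hiJ hJi
          have hjT : j ∈ T := hJT hjJ
          have hji : j ≠ i := fun h => hiT (h ▸ hjT)
          have hsum1 : ∑ x ∈ insert j (I.erase i), w x
              = w j + ((∑ x ∈ I, w x) - w i) := by
            rw [sum_insert (fun h => hjI (mem_of_mem_erase h)),
              Finset.sum_erase_eq_sub hiI]
          have hsum2 : ∑ x ∈ insert i (J.erase j), w x
              = w i + ((∑ x ∈ J, w x) - w j) := by
            rw [sum_insert (fun h => hiJ (mem_of_mem_erase h)),
              Finset.sum_erase_eq_sub hjJ]
          have hsub2 : insert i (J.erase j) ⊆ (insert i T).erase j := by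
            intro x hx
            rcases mem_insert.mp hx with rfl | hx2
            · exact mem_erase.mpr ⟨fun hh => hji hh.symm, mem_insert_self _ _⟩
            · exact mem_erase.mpr ⟨(mem_erase.mp hx2).1,
                mem_insert.mpr (Or.inr (hJT (mem_of_mem_erase hx2)))⟩
          have hiTj : (insert i T).erase j ≠ ∅ := by
            intro h
            have : i ∈ (insert i T).erase j :=
              mem_erase.mpr ⟨fun hh => hji hh.symm, mem_insert_self _ _⟩
            rw [h] at this; exact notMem_empty i this
          have h3 : ∑ x ∈ insert i (J.erase j), w x ≤ ρ ((insert i T).erase j) :=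
            le_rank M w hindep2 hsub2
          by_cases hjS : j ∈ S
          · left
            have hsub1 : insert j (I.erase i) ⊆ S.erase i := by
              intro x hx
              rcases mem_insert.mp hx with rfl | hx2
              · exact mem_erase.mpr ⟨hji, hjS⟩
              · exact erase_subset_erase _ hIS hx2
            have h1 : ∑ x ∈ insert j (I.erase i), w x ≤ ρ (S.erase i) :=
              le_rank M w hindep1 hsub1
            have hSi : S.erase i ≠ ∅ := ne_empty_of_mem (mem_erase.mpr ⟨hji, hjS⟩)
            rw [hvne S hSne, hvne T hT, hvne _ hSi, hvne _ hiTins]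
            have h5 : ρ T ≤ ρ (insert i T) := rank_mono M w (subset_insert _ _)
            -- ρ(S∖i) + ρ(T∪i): use h1 and h3' where ρ(T∪i) ≥ ρ((T∪i)∖j) not needed;
            -- instead use insert i (J.erase j) ⊆ insert i T directly
            have h6 : ∑ x ∈ insert i (J.erase j), w x ≤ ρ (insert i T) := by
              apply le_rank M w hindep2
              exact hsub2.trans (erase_subset _ _)
            rw [hsum1] at h1
            rw [hsum2] at h6
            linarith
          · right
            refine ⟨j, mem_sdiff.mpr ⟨hjT, hjS⟩, ?_⟩
            have hsub1 : insert j (I.erase i) ⊆ insert j (S.erase i) :=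
              insert_subset_insert _ (erase_subset_erase _ hIS)
            have h1 : ∑ x ∈ insert j (I.erase i), w x ≤ ρ (insert j (S.erase i)) :=
              le_rank M w hindep1 hsub1
            rw [hvne S hSne, hvne T hT, hvne _ (insert_ne_empty _ _), hvne _ hiTj]
            rw [hsum1] at h1
            rw [hsum2] at h3
            linarith
      · -- B1 : i ∉ I
        left
        have hSi : S.erase i ≠ ∅ := by
          intro h
          have hSeq : S = {i} := by
            apply subset_antisymm
            · intro x hx
              by_contra hxi
              exact (notMem_empty x) (h ▸ mem_erase.mpr ⟨fun hh => hxi (by simp [hh]), hx⟩)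
            · simp [hiS]
          have hIe : I = ∅ := by
            rw [hSeq] at hIS
            rcases subset_singleton_iff.mp hIS with h' | h'
            · exact h'
            · exact absurd (h' ▸ hiI) (fun hh => hh (mem_singleton_self i))
          have hρ0 : ρ S = 0 := by rw [hIeq, hIe]; simp
          have : 0 < ρ S := rank_pos M w hw ⟨i, hiS⟩ (fun a _ => hloop a)
          rw [hρ0] at this; exact lt_irrefl 0 this
        rw [hvne S hSne, hvne T hT, hvne _ hSi, hvne _ hiTins]
        have hIsub : I ⊆ S.erase i := fun x hx =>
          mem_erase.mpr ⟨fun h => hiI (h ▸ hx), hIS hx⟩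
        have h1 : ∑ x ∈ I, w x ≤ ρ (S.erase i) := le_rank M w hI hIsub
        have h2 : ρ T ≤ ρ (insert i T) := rank_mono M w (subset_insert _ _)
        linarith

end PartOne
section MergeLemmas

variable (E1 E2 : Finset α) (u1 u2 : Finset α → ℝ) (S : Finset α)

lemma merge_set_eq :
    {x : ℝ | ∃ S1 S2 : Finset α, S = S1 ∪ S2 ∧ Disjoint S1 S2 ∧
      S1 ⊆ E1 ∧ S2 ⊆ E2 ∧ x = u1 S1 + u2 S2} =
    ↑(((S.powerset ×ˢ S.powerset).filter
        (fun p => S = p.1 ∪ p.2 ∧ Disjoint p.1 p.2 ∧ p.1 ⊆ E1 ∧ p.2 ⊆ E2)).image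
      (fun p => u1 p.1 + u2 p.2)) := by
  ext x
  simp only [Set.mem_setOf_eq, coe_image, Set.mem_image, mem_coe, mem_filter,
    mem_product, mem_powerset]
  constructor
  · rintro ⟨S1, S2, h1, h2, h3, h4, rfl⟩
    exact ⟨(S1, S2), ⟨⟨h1 ▸ subset_union_left, h1 ▸ subset_union_right⟩, h1, h2, h3, h4⟩, rfl⟩
  · rintro ⟨⟨S1, S2⟩, ⟨_, h1, h2, h3, h4⟩, rfl⟩
    exact ⟨S1, S2, h1, h2, h3, h4, rfl⟩

lemma merge_le {S1 S2 : Finset α} (h1 : S = S1 ∪ S2) (h2 : Disjoint S1 S2)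
    (h3 : S1 ⊆ E1) (h4 : S2 ⊆ E2) :
    u1 S1 + u2 S2 ≤ mergeVal E1 E2 u1 u2 S := by
  apply le_csSup
  · rw [merge_set_eq]; exact Finset.bddAbove _
  · exact ⟨S1, S2, h1, h2, h3, h4, rfl⟩

lemma merge_attain (hS : S ⊆ E1 ∪ E2) :
    ∃ S1 S2 : Finset α, S = S1 ∪ S2 ∧ Disjoint S1 S2 ∧ S1 ⊆ E1 ∧ S2 ⊆ E2 ∧
      mergeVal E1 E2 u1 u2 S = u1 S1 + u2 S2 := by
  have hne : {x : ℝ | ∃ S1 S2 : Finset α, S = S1 ∪ S2 ∧ Disjoint S1 S2 ∧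
      S1 ⊆ E1 ∧ S2 ⊆ E2 ∧ x = u1 S1 + u2 S2}.Nonempty := by
    refine ⟨u1 (S ∩ E1) + u2 (S \ E1), S ∩ E1, S \ E1, ?_, ?_, inter_subset_right, ?_, rfl⟩
    · ext x
      simp only [mem_union, mem_inter, mem_sdiff]
      tauto
    · exact disjoint_left.mpr (fun {a} ha hb => (mem_sdiff.mp hb).2 (mem_inter.mp ha).2)
    · intro x hx
      rw [mem_sdiff] at hx
      rcases mem_union.mp (hS hx.1) with h | h
      · exact absurd h hx.2
      · exact h
  have hfin : {x : ℝ | ∃ S1 S2 : Finset α, S = S1 ∪ S2 ∧ Disjoint S1 S2 ∧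
      S1 ⊆ E1 ∧ S2 ⊆ E2 ∧ x = u1 S1 + u2 S2}.Finite := by
    rw [merge_set_eq]; exact Finset.finite_toSet _
  obtain ⟨S1, S2, h1, h2, h3, h4, h5⟩ := hne.csSup_mem hfin
  exact ⟨S1, S2, h1, h2, h3, h4, h5⟩

lemma merge_comm : mergeVal E1 E2 u1 u2 = mergeVal E2 E1 u2 u1 := by
  funext S
  unfold mergeVal
  congr 1
  ext x
  constructor
  · rintro ⟨S1, S2, h1, h2, h3, h4, rfl⟩
    exact ⟨S2, S1, by rw [union_comm] at h1; exact h1, h2.symm, h4, h3, by ring⟩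
  · rintro ⟨S1, S2, h1, h2, h3, h4, rfl⟩
    exact ⟨S2, S1, by rw [union_comm] at h1; exact h1, h2.symm, h4, h3, by ring⟩

end MergeLemmas
/-- Augmentation within the family of maximizers of a function with the
M♮-exchange property. -/
lemma argmax_aug (E : Finset α) (g : Finset α → ℝ) (m : ℝ)
    (hexch : ∀ S T : Finset α, S ⊆ E → T ⊆ E → ∀ i ∈ S \ T,
      g S + g T ≤ g (S.erase i) + g (insert i T) ∨
        ∃ j ∈ T \ S, g S + g T ≤ g (insert j (S.erase i)) + g ((insert i T).erase j))
    (hm : ∀ A : Finset α, A ⊆ E → g A ≤ m) :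
    ∀ (n : ℕ) (A A' : Finset α), (A' \ A).card = n → A ⊆ E → A' ⊆ E →
      g A = m → g A' = m → A.card < A'.card →
      ∃ e ∈ A', e ∉ A ∧ g (insert e A) = m := by
  intro n
  induction n using Nat.strong_induction_on with
  | _ n ih =>
    intro A A' hn hA hA' hgA hgA' hcard
    have hne : (A' \ A).Nonempty := by
      rw [nonempty_iff_ne_empty]
      intro h
      have : A' ⊆ A := by
        intro x hx
        by_contra hxA
        exact (notMem_empty x) (h ▸ mem_sdiff.mpr ⟨hx, hxA⟩)
      exact absurd (card_le_card this) (by omega)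
    obtain ⟨i, hi⟩ := hne
    obtain ⟨hiA', hiA⟩ := mem_sdiff.mp hi
    rcases hexch A' A hA' hA i hi with h | ⟨j, hj, h⟩
    · -- branch 1 : insert i A is a maximizer
      have h1 : g (A'.erase i) ≤ m := hm _ ((erase_subset _ _).trans hA')
      have h2 : g (insert i A) ≤ m := hm _ (insert_subset (hA' hiA') hA)
      refine ⟨i, hiA', hiA, ?_⟩
      linarith [hgA ▸ hgA' ▸ h]
    · -- branch 2 : recurse with A'' = insert j (A'.erase i)
      obtain ⟨hjA, hjA'⟩ := mem_sdiff.mp hj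
      have hA'' : insert j (A'.erase i) ⊆ E := insert_subset (hA hjA)
        ((erase_subset _ _).trans hA')
      have h1 : g (insert j (A'.erase i)) ≤ m := hm _ hA''
      have h2 : g ((insert i A).erase j) ≤ m := by
        apply hm
        exact (erase_subset _ _).trans (insert_subset (hA' hiA') hA)
      have hg1 : g (insert j (A'.erase i)) = m := by linarith
      have hcard'' : (insert j (A'.erase i)).card = A'.card := by
        rw [card_insert_of_notMem (fun hh => hjA' (mem_of_mem_erase hh)),
          card_erase_of_mem hiA']
        have : 0 < A'.card := card_pos.mpr ⟨i, hiA'⟩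
        omega
      have hsd : (insert j (A'.erase i)) \ A = (A' \ A).erase i := by
        ext x
        simp only [mem_sdiff, mem_insert, mem_erase]
        constructor
        · rintro ⟨(rfl | ⟨hx1, hx2⟩), hxA⟩
          · exact absurd hjA hxA
          · exact ⟨hx1, hx2, hxA⟩
        · rintro ⟨hx1, hx2, hxA⟩
          exact ⟨Or.inr ⟨hx1, hx2⟩, hxA⟩
      have hcardlt : ((insert j (A'.erase i)) \ A).card < n := by
        rw [hsd, ← hn]
        exact card_erase_lt_of_mem hi
      obtain ⟨e, he1, he2, he3⟩ := ih _ hcardlt A (insert j (A'.erase i)) rfl hA hA''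
        hgA hg1 (by omega)
      refine ⟨e, ?_, he2, he3⟩
      rcases mem_insert.mp he1 with rfl | he
      · exact absurd hjA he2
      · exact mem_of_mem_erase he
/-- The free matroid on a finset. -/
def freeOn (A : Finset α) : FinMatroid α where
  E := A
  Indep I := I ⊆ A
  indep_empty := empty_subset A
  indep_subset := fun I J hJ hIJ => hIJ.trans hJ
  indep_aug := by
    intro I J hI hJ hcard
    have : (J \ I).Nonempty := by
      rw [nonempty_iff_ne_empty]
      intro h
      have : J ⊆ I := by
        intro x hx
        by_contra hxI
        exact (notMem_empty x) (h ▸ mem_sdiff.mpr ⟨hx, hxI⟩)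
      exact absurd (card_le_card this) (by omega)
    obtain ⟨e, he⟩ := this
    obtain ⟨h1, h2⟩ := mem_sdiff.mp he
    exact ⟨e, h1, h2, insert_subset (hJ h1) hI⟩
  subset_ground := fun I hI => hI

lemma freeOn_indep (A I : Finset α) : (freeOn A).Indep I ↔ I ⊆ A := Iff.rfl

/-- If `M` is irreducible with full ground set (and there are two distinct
elements), then the ground set is dependent. -/
lemma not_indep_univ [Fintype α] (M : FinMatroid α) (hE : M.E = univ)
    (hirr : MatroidIrreducible M) {a b : α} (hab : a ≠ b) :
    ¬ M.Indep univ := by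
  intro huniv
  have hall : ∀ I : Finset α, M.Indep I := fun I => M.indep_subset huniv (subset_univ I)
  have hunion : IsMatroidUnion M (freeOn {a}) (freeOn (univ \ {a})) := by
    constructor
    · rw [hE]
      ext x
      simp only [freeOn, mem_union, mem_sdiff, mem_univ, mem_singleton, true_iff, true_and]
      tauto
    · intro I
      constructor
      · intro _
        classical
        refine ⟨I ∩ {a}, I \ {a}, inter_subset_right, ?_, ?_⟩
        · intro x hx
          rw [mem_sdiff] at hx ⊢
          exact ⟨mem_univ x, hx.2⟩
        · ext x
          simp only [mem_union, mem_inter, mem_sdiff]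
          tauto
      · intro _
        exact hall I
  rcases hirr _ _ hunion with h | h
  · have : ({a} : Finset α) = univ := by
      have := congrArg FinMatroid.E h
      simpa [freeOn, hE] using this
    have hbmem : b ∈ ({a} : Finset α) := by rw [this]; exact mem_univ b
    exact hab (mem_singleton.mp hbmem).symm
  · have : (univ \ {a} : Finset α) = univ := by
      have := congrArg FinMatroid.E h
      simpa [freeOn, hE] using this
    have hamem : a ∈ (univ \ {a} : Finset α) := by rw [this]; exact mem_univ a
    exact (mem_sdiff.mp hamem).2 (mem_singleton_self a)
/-- Closure of a property under erasing extends to all subsets. -/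
lemma eraseStepClosure_aux (P : Finset α → Prop)
    (hstep : ∀ A x, P A → x ∈ A → P (A.erase x)) :
    ∀ (n : ℕ) (A A' : Finset α), (A \ A').card = n → P A → A' ⊆ A → P A' := by
  intro n
  induction n using Nat.strong_induction_on with
  | _ n ih =>
    intro A A' hn hP hsub
    by_cases h : A' = A
    · exact h ▸ hP
    · have hne : (A \ A').Nonempty := by
        rw [nonempty_iff_ne_empty]
        intro hh
        have hAA : A ⊆ A' := by
          intro x hx; by_contra hxA
          exact notMem_empty x (hh ▸ mem_sdiff.mpr ⟨hx, hxA⟩)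
        exact h (subset_antisymm hsub hAA)
      obtain ⟨x, hx⟩ := hne
      obtain ⟨hxA, hxA'⟩ := mem_sdiff.mp hx
      have h1 : P (A.erase x) := hstep A x hP hxA
      have h2 : A' ⊆ A.erase x := fun y hy =>
        mem_erase.mpr ⟨fun hh => hxA' (hh ▸ hy), hsub hy⟩
      have h3 : ((A.erase x) \ A').card < n := by
        rw [← hn]
        have heq : (A.erase x) \ A' = (A \ A').erase x := by
          ext y; simp only [mem_erase, mem_sdiff]; tauto
        rw [heq]
        exact card_erase_lt_of_mem hx
      exact ih _ h3 _ _ rfl h1 h2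

lemma eraseStepClosure (P : Finset α → Prop)
    (hstep : ∀ A x, P A → x ∈ A → P (A.erase x))
    {A A' : Finset α} (hP : P A) (hsub : A' ⊆ A) : P A' :=
  eraseStepClosure_aux P hstep _ A A' rfl hP hsub
section Core

open FinMatroid GrossSubstitutes

variable [Fintype α]

/-- Core lemma: in the "all `u2`-singletons have full value" case, `u2` must
equal the shifted weighted rank, otherwise `M` is reducible. -/
lemma core_lemma (M : FinMatroid α) (hE : M.E = univ)
    (hloop : ∀ i : α, M.Indep {i}) (hirr : MatroidIrreducible M)
    (w : α → ℝ) (hw : ∀ i, 0 < w i) {a b : α} (hab : a ≠ b)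
    (c : ℝ) (hc : 0 < c)
    (E1 : Finset α) (u1 u2 : Finset α → ℝ)
    (hgs1 : GrossSubstitutes E1 u1) (hgs2 : GrossSubstitutes univ u2)
    (hveq : ∀ S : Finset α,
      (if S = ∅ then 0 else weightedRank M w S + c) = mergeVal E1 univ u1 u2 S)
    (hu2 : ∀ i : α, u2 {i} = w i + c) :
    (fun S : Finset α => if S = ∅ then 0 else weightedRank M w S + c) = u2 := by
  have hw' : ∀ i, 0 ≤ w i := fun i => (hw i).le
  set ρ := weightedRank M w with hρ
  by_contra hne
  -- basic facts
  have hu10 : u1 ∅ = 0 := hgs1.1.1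
  have hu20 : u2 ∅ = 0 := hgs2.1.1
  have hnotfree : ¬ M.Indep univ := not_indep_univ M hE hirr hab
  have hsing_ne : ∀ x : α, ({x} : Finset α) ≠ univ := by
    intro x h
    have ha' : a ∈ ({x} : Finset α) := by rw [h]; exact mem_univ a
    have hb' : b ∈ ({x} : Finset α) := by rw [h]; exact mem_univ b
    exact hab ((mem_singleton.mp ha').trans (mem_singleton.mp hb').symm)
  have hrsing : ∀ x : α, ρ {x} = w x := fun x => rank_singleton M w hw' (hloop x)
  -- u2 bounded by v
  have hu2le : ∀ B : Finset α, B ≠ ∅ → u2 B ≤ ρ B + c := by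
    intro B hB
    have h := merge_le E1 univ u1 u2 B (S1 := ∅) (S2 := B)
      (by simp) (disjoint_empty_left B) (empty_subset E1) (subset_univ B)
    rw [hu10, ← hveq B, if_neg hB] at h
    linarith
  -- u1 bounded using a singleton on the other side
  have f1 : ∀ A : Finset α, A ⊆ E1 → ∀ x, x ∉ A → u1 A ≤ ρ (insert x A) - w x := by
    intro A hA x hx
    have hunion : insert x A = A ∪ {x} := by
      rw [insert_eq, union_comm]
    have h := merge_le E1 univ u1 u2 (insert x A) hunion
      (disjoint_singleton_right.mpr hx) hA (subset_univ _)
    rw [hu2 x, ← hveq (insert x A), if_neg (insert_ne_empty _ _)] at h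
    linarith
  have f1' : ∀ A : Finset α, A ⊆ E1 → A ≠ univ → u1 A ≤ ρ A := by
    intro A hA hAne
    obtain ⟨x, hx⟩ : ∃ x, x ∉ A := by
      by_contra hcon; push_neg at hcon
      exact hAne (eq_univ_iff_forall.mpr hcon)
    have h1 := f1 A hA x hx
    have h2 := rank_insert_le M w hw' A x
    rw [← hρ] at h2
    linarith
  have f1'' : ∀ A : Finset α, A ⊆ E1 → u1 A ≤ ∑ i ∈ A, w i := by
    intro A hA
    by_cases hAne : A = univ
    · subst hAne
      have h1 : u1 univ ≤ u1 (univ.erase a) + u1 {a} :=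
        sub_lemma hgs1 hA (mem_univ a)
      have h2 : u1 (univ.erase a) ≤ ρ (univ.erase a) := by
        apply f1' _ ((erase_subset _ _).trans hA)
        intro h
        exact (mem_erase.mp (h ▸ mem_univ a)).1 rfl
      have h3 : ρ (univ.erase a) ≤ ∑ i ∈ univ.erase a, w i := by
        rw [hρ]; exact rank_le_sum M w hw' _
      have h4 : u1 {a} ≤ ρ {a} := f1' _ ((singleton_subset_iff.mpr (hA (mem_univ a)))) (hsing_ne a)
      have h5 : ∑ i ∈ univ.erase a, w i = (∑ i ∈ univ, w i) - w a :=
        Finset.sum_erase_eq_sub (mem_univ a)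
      rw [hrsing a] at h4
      linarith
    · have h1 := f1' A hA hAne
      have h2 : ρ A ≤ ∑ i ∈ A, w i := by rw [hρ]; exact rank_le_sum M w hw' A
      linarith
  -- tight u1 sets are independent
  have hindep1 : ∀ A : Finset α, A ⊆ E1 → u1 A = ∑ i ∈ A, w i → M.Indep A := by
    intro A hA htight
    by_cases hAne : A = univ
    · exfalso
      subst hAne
      have h1 : u1 univ ≤ u1 (univ.erase b) + u1 {b} :=
        sub_lemma hgs1 hA (mem_univ b)
      have h2 : u1 {b} ≤ w b := by
        have := f1' {b} (singleton_subset_iff.mpr (hA (mem_univ b))) (hsing_ne b)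
        rwa [hrsing b] at this
      have h3 : u1 (univ.erase b) ≥ (∑ i ∈ univ, w i) - w b := by
        rw [← htight]; linarith
      have hunion : (univ : Finset α) = (univ.erase b) ∪ {b} := by
        rw [union_comm, ← insert_eq, insert_erase (mem_univ b)]
      have h4 := merge_le E1 univ u1 u2 univ hunion
        (disjoint_singleton_right.mpr (fun h => (mem_erase.mp h).1 rfl))
        ((erase_subset _ _).trans hA) (subset_univ _)
      rw [hu2 b, ← hveq univ, if_neg (by intro hh; exact (notMem_empty b) (hh ▸ mem_univ b))] at h4
      have h5 : ∑ i ∈ (univ : Finset α), w i ≤ ρ univ := by linarith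
      exact hnotfree (indep_of_rank_eq M w hw h5)
    · apply indep_of_rank_eq M w hw
      rw [← hρ]
      calc ∑ i ∈ A, w i = u1 A := htight.symm
        _ ≤ ρ A := f1' A hA hAne
  -- in tight sets, singletons are tight
  have hAne_of_tight : ∀ A : Finset α, A ⊆ E1 → u1 A = ∑ i ∈ A, w i → A ≠ univ := by
    intro A hA htight h
    exact hnotfree (h ▸ hindep1 A hA htight)
  have hsing1 : ∀ A : Finset α, A ⊆ E1 → u1 A = ∑ i ∈ A, w i →
      ∀ y ∈ A, u1 {y} = w y := by
    intro A hA htight y hy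
    have hAindep := hindep1 A hA htight
    have h1 : u1 A ≤ u1 (A.erase y) + u1 {y} := sub_lemma hgs1 hA hy
    have hAeN : A.erase y ≠ univ := by
      intro h
      exact (mem_erase.mp (h ▸ mem_univ y)).1 rfl
    have h2 : u1 (A.erase y) ≤ ρ (A.erase y) :=
      f1' _ ((erase_subset _ _).trans hA) hAeN
    have h3 : ρ (A.erase y) = ∑ i ∈ A.erase y, w i := by
      rw [hρ]
      exact rank_indep_eq M w hw' (M.indep_subset hAindep (erase_subset _ _))
    have h4 : ∑ i ∈ A.erase y, w i = (∑ i ∈ A, w i) - w y :=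
      Finset.sum_erase_eq_sub hy
    have h5 : u1 {y} ≤ w y := by
      have := f1' {y} (singleton_subset_iff.mpr (hA hy)) (hsing_ne y)
      rwa [hrsing y] at this
    linarith
  -- one-step downward closure for tight u1 sets
  have down1 : ∀ A : Finset α, (A ⊆ E1 ∧ u1 A = ∑ i ∈ A, w i) → ∀ x ∈ A,
      (A.erase x ⊆ E1 ∧ u1 (A.erase x) = ∑ i ∈ A.erase x, w i) := by
    intro A hA x hx
    obtain ⟨hAsub, htight⟩ := hA
    refine ⟨(erase_subset _ _).trans hAsub, ?_⟩
    have hAindep := hindep1 A hAsub htight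
    by_cases hAe : A.erase x = ∅
    · rw [hAe, hu10, sum_empty]
    · obtain ⟨y, hy⟩ := nonempty_iff_ne_empty.mpr hAe
      obtain ⟨hyx, hyA⟩ := mem_erase.mp hy
      have hm := marginal_pair hgs1 A.card A rfl hAsub hx hyA (fun h => hyx h.symm)
      have hxyA : ({x, y} : Finset α) ⊆ A := by
        intro t ht
        rcases mem_insert.mp ht with rfl | ht
        · exact hx
        · exact (mem_singleton.mp ht) ▸ hyA
      have hxyne : ({x, y} : Finset α) ≠ univ := by
        intro h
        exact hAne_of_tight A hAsub htight
          (univ_subset_iff.mp (h ▸ hxyA))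
      have h1 : u1 {x, y} ≤ ρ {x, y} := f1' _ (hxyA.trans hAsub) hxyne
      have h2 : ρ {x, y} ≤ w x + w y := by
        rw [hρ]
        have := rank_le_sum M w hw' {x, y}
        rwa [sum_pair (fun h => hyx h.symm)] at this
      have h3 : u1 {y} = w y := hsing1 A hAsub htight y hyA
      have h4 : u1 (A.erase x) ≤ ∑ i ∈ A.erase x, w i :=
        f1'' _ ((erase_subset _ _).trans hAsub)
      have h5 : ∑ i ∈ A.erase x, w i = (∑ i ∈ A, w i) - w x :=
        Finset.sum_erase_eq_sub hx
      linarith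
  have Ind1_closed : ∀ {A A' : Finset α},
      (A ⊆ E1 ∧ u1 A = ∑ i ∈ A, w i) → A' ⊆ A →
      (A' ⊆ E1 ∧ u1 A' = ∑ i ∈ A', w i) :=
    fun hA hsub => eraseStepClosure _ (fun A x hP hx => down1 A hP x hx) hA hsub
  -- tight u2 sets
  have hindep2 : ∀ B : Finset α, B ≠ ∅ → u2 B = (∑ i ∈ B, w i) + c → M.Indep B := by
    intro B hB htight
    apply indep_of_rank_eq M w hw
    have := hu2le B hB
    rw [htight] at this
    rw [← hρ]
    linarith
  have down2 : ∀ B : Finset α, (B = ∅ ∨ u2 B = (∑ i ∈ B, w i) + c) → ∀ x ∈ B,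
      (B.erase x = ∅ ∨ u2 (B.erase x) = (∑ i ∈ B.erase x, w i) + c) := by
    intro B hB x hx
    rcases hB with rfl | htight
    · exact absurd hx (notMem_empty x)
    have hBne : B ≠ ∅ := ne_empty_of_mem hx
    have hBindep := hindep2 B hBne htight
    by_cases hBe : B.erase x = ∅
    · exact Or.inl hBe
    right
    obtain ⟨y, hy⟩ := nonempty_iff_ne_empty.mpr hBe
    obtain ⟨hyx, hyB⟩ := mem_erase.mp hy
    have hm := marginal_pair hgs2 B.card B rfl (subset_univ B) hx hyB (fun h => hyx h.symm)
    have h1 : u2 {x, y} ≤ ρ {x, y} + c := hu2le _ (insert_ne_empty _ _)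
    have h2 : ρ {x, y} ≤ w x + w y := by
      rw [hρ]
      have := rank_le_sum M w hw' {x, y}
      rwa [sum_pair (fun h => hyx h.symm)] at this
    have h3 : u2 {y} = w y + c := hu2 y
    have h4 : u2 (B.erase x) ≤ ρ (B.erase x) + c := hu2le _ hBe
    have h5 : ρ (B.erase x) = ∑ i ∈ B.erase x, w i := by
      rw [hρ]
      exact rank_indep_eq M w hw' (M.indep_subset hBindep (erase_subset _ _))
    have h6 : ∑ i ∈ B.erase x, w i = (∑ i ∈ B, w i) - w x :=
      Finset.sum_erase_eq_sub hx
    have h7 : u2 (B.erase x) ≥ (∑ i ∈ B.erase x, w i) + c := by linarith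
    linarith
  have Ind2_closed : ∀ {B B' : Finset α},
      (B = ∅ ∨ u2 B = (∑ i ∈ B, w i) + c) → B' ⊆ B →
      (B' = ∅ ∨ u2 B' = (∑ i ∈ B', w i) + c) :=
    fun hB hsub => eraseStepClosure _ (fun B x hP hx => down2 B hP x hx) hB hsub
  -- the two tight-set matroids
  have hexch1 : ∀ S T : Finset α, S ⊆ E1 → T ⊆ E1 → ∀ i ∈ S \ T,
      (u1 S - ∑ i ∈ S, w i) + (u1 T - ∑ i ∈ T, w i) ≤
        (u1 (S.erase i) - ∑ x ∈ S.erase i, w x) +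
          (u1 (insert i T) - ∑ x ∈ insert i T, w x) ∨
        ∃ j ∈ T \ S, (u1 S - ∑ i ∈ S, w i) + (u1 T - ∑ i ∈ T, w i) ≤
          (u1 (insert j (S.erase i)) - ∑ x ∈ insert j (S.erase i), w x) +
            (u1 ((insert i T).erase j) - ∑ x ∈ (insert i T).erase j, w x) := by
    intro S T hS hT i hi
    obtain ⟨hiS, hiT⟩ := mem_sdiff.mp hi
    have e1 : ∑ x ∈ S.erase i, w x = (∑ x ∈ S, w x) - w i :=
      Finset.sum_erase_eq_sub hiS
    have e2 : ∑ x ∈ insert i T, w x = w i + ∑ x ∈ T, w x := sum_insert hiT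
    rcases hgs1.2 hS hT i hi with h | ⟨j, hj, h⟩
    · left
      rw [e1, e2]
      linarith
    · right
      obtain ⟨hjT, hjS⟩ := mem_sdiff.mp hj
      have hji : j ≠ i := fun hh => hiT (hh ▸ hjT)
      have e3 : ∑ x ∈ insert j (S.erase i), w x = w j + ((∑ x ∈ S, w x) - w i) := by
        rw [sum_insert (fun hh => hjS (mem_of_mem_erase hh)), e1]
      have e4 : ∑ x ∈ (insert i T).erase j, w x = (w i + ∑ x ∈ T, w x) - w j := by
        rw [Finset.sum_erase_eq_sub (mem_insert.mpr (Or.inr hjT)), e2]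
      refine ⟨j, hj, ?_⟩
      rw [e3, e4]
      linarith
  have hexch2 : ∀ S T : Finset α, S ⊆ univ → T ⊆ univ → ∀ i ∈ S \ T,
      (u2 S - ∑ i ∈ S, w i) + (u2 T - ∑ i ∈ T, w i) ≤
        (u2 (S.erase i) - ∑ x ∈ S.erase i, w x) +
          (u2 (insert i T) - ∑ x ∈ insert i T, w x) ∨
        ∃ j ∈ T \ S, (u2 S - ∑ i ∈ S, w i) + (u2 T - ∑ i ∈ T, w i) ≤
          (u2 (insert j (S.erase i)) - ∑ x ∈ insert j (S.erase i), w x) +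
            (u2 ((insert i T).erase j) - ∑ x ∈ (insert i T).erase j, w x) := by
    intro S T hS hT i hi
    obtain ⟨hiS, hiT⟩ := mem_sdiff.mp hi
    have e1 : ∑ x ∈ S.erase i, w x = (∑ x ∈ S, w x) - w i :=
      Finset.sum_erase_eq_sub hiS
    have e2 : ∑ x ∈ insert i T, w x = w i + ∑ x ∈ T, w x := sum_insert hiT
    rcases hgs2.2 hS hT i hi with h | ⟨j, hj, h⟩
    · left
      rw [e1, e2]
      linarith
    · right
      obtain ⟨hjT, hjS⟩ := mem_sdiff.mp hj
      have hji : j ≠ i := fun hh => hiT (hh ▸ hjT)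
      have e3 : ∑ x ∈ insert j (S.erase i), w x = w j + ((∑ x ∈ S, w x) - w i) := by
        rw [sum_insert (fun hh => hjS (mem_of_mem_erase hh)), e1]
      have e4 : ∑ x ∈ (insert i T).erase j, w x = (w i + ∑ x ∈ T, w x) - w j := by
        rw [Finset.sum_erase_eq_sub (mem_insert.mpr (Or.inr hjT)), e2]
      refine ⟨j, hj, ?_⟩
      rw [e3, e4]
      linarith
  have hm2 : ∀ B : Finset α, B ⊆ univ → (fun B => u2 B - ∑ i ∈ B, w i) B ≤ c := by
    intro B _
    show u2 B - ∑ i ∈ B, w i ≤ c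
    by_cases hB : B = ∅
    · rw [hB, hu20, sum_empty]; linarith
    · have h1 := hu2le B hB
      have h2 : ρ B ≤ ∑ i ∈ B, w i := by rw [hρ]; exact rank_le_sum M w hw' B
      linarith
  set M1 : FinMatroid α :=
    { E := E1
      Indep := fun A => A ⊆ E1 ∧ u1 A = ∑ i ∈ A, w i
      indep_empty := ⟨empty_subset _, by rw [hu10, sum_empty]⟩
      indep_subset := fun I J hJ hIJ => Ind1_closed hJ hIJ
      indep_aug := by
        intro I J hI hJ hcard
        have haug := argmax_aug E1 (fun A => u1 A - ∑ i ∈ A, w i) 0 hexch1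
          (fun A hA => by have := f1'' A hA; show u1 A - ∑ i ∈ A, w i ≤ 0; linarith)
          (J \ I).card I J rfl hI.1 hJ.1
          (by show u1 I - ∑ i ∈ I, w i = 0; rw [hI.2]; ring)
          (by show u1 J - ∑ i ∈ J, w i = 0; rw [hJ.2]; ring) hcard
        obtain ⟨e, he1, he2, he3⟩ := haug
        refine ⟨e, he1, he2, insert_subset (hJ.1 he1) hI.1, ?_⟩
        have he3' : u1 (insert e I) - ∑ i ∈ insert e I, w i = 0 := he3
        linarith
      subset_ground := fun I hI => hI.1 } with hM1
  set M2 : FinMatroid α :=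
    { E := univ
      Indep := fun B => B = ∅ ∨ u2 B = (∑ i ∈ B, w i) + c
      indep_empty := Or.inl rfl
      indep_subset := fun I J hJ hIJ => Ind2_closed hJ hIJ
      indep_aug := by
        intro I J hI hJ hcard
        have hJne : J ≠ ∅ := by
          intro h
          rw [h, card_empty] at hcard
          omega
        have hJt : u2 J = (∑ i ∈ J, w i) + c := hJ.resolve_left hJne
        rcases hI with rfl | hIt
        · obtain ⟨e, he⟩ := nonempty_iff_ne_empty.mpr hJne
          refine ⟨e, he, notMem_empty e, Or.inr ?_⟩
          have : insert e (∅ : Finset α) = {e} := rfl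
          rw [this, hu2 e, sum_singleton]
        · have haug := argmax_aug univ (fun B => u2 B - ∑ i ∈ B, w i) c hexch2 hm2
            (J \ I).card I J rfl (subset_univ I) (subset_univ J)
            (by show u2 I - ∑ i ∈ I, w i = c; rw [hIt]; ring)
            (by show u2 J - ∑ i ∈ J, w i = c; rw [hJt]; ring) hcard
          obtain ⟨e, he1, he2, he3⟩ := haug
          refine ⟨e, he1, he2, Or.inr ?_⟩
          have he3' : u2 (insert e I) - ∑ i ∈ insert e I, w i = c := he3
          linarith
      subset_ground := fun I _ => subset_univ I } with hM2
  -- M is the union of M1 and M2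
  have hunion : IsMatroidUnion M M1 M2 := by
    constructor
    · rw [hE, hM1, hM2]
      exact (union_eq_right.mpr (subset_univ E1)).symm
    · intro I
      constructor
      · intro hIind
        by_cases hI : I = ∅
        · exact ⟨∅, ∅, M1.indep_empty, M2.indep_empty, by rw [hI, union_empty]⟩
        · obtain ⟨T1, T2, h1, h2, h3, h4, h5⟩ :=
            merge_attain E1 univ u1 u2 I (fun x _ => mem_union_right _ (mem_univ x))
          rw [← hveq I, if_neg hI] at h5
          have hρI : ρ I = ∑ i ∈ I, w i := by
            rw [hρ]; exact rank_indep_eq M w hw' hIind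
          have hT1 : T1 ⊆ I := h1 ▸ subset_union_left
          have hT2 : T2 ⊆ I := h1 ▸ subset_union_right
          have hsum : (∑ i ∈ T1, w i) + (∑ i ∈ T2, w i) = ∑ i ∈ I, w i := by
            rw [h1, sum_union h2]
          by_cases hT2e : T2 = ∅
          · exfalso
            have hT1I : T1 = I := by
              rw [h1, hT2e, union_empty]
            have := f1'' T1 h3
            rw [hT2e, hu20, hT1I] at h5
            rw [hT1I] at this
            rw [hρI] at h5
            linarith
          · have hb1 : u1 T1 ≤ ∑ i ∈ T1, w i := f1'' T1 h3
            have hb2 : u2 T2 ≤ (∑ i ∈ T2, w i) + c := by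
              have h6 := hu2le T2 hT2e
              have h7 : ρ T2 = ∑ i ∈ T2, w i := by
                rw [hρ]; exact rank_indep_eq M w hw' (M.indep_subset hIind hT2)
              linarith
            have he1 : u1 T1 = ∑ i ∈ T1, w i := by
              rw [hρI] at h5
              linarith
            have he2 : u2 T2 = (∑ i ∈ T2, w i) + c := by
              rw [hρI] at h5
              linarith
            exact ⟨T1, T2, ⟨h3, he1⟩, Or.inr he2, h1⟩
      · rintro ⟨I1, I2, hI1, hI2, rfl⟩
        have hB' : I2 \ I1 = ∅ ∨ u2 (I2 \ I1) = (∑ i ∈ I2 \ I1, w i) + c :=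
          Ind2_closed hI2 (sdiff_subset)
        rcases hB' with hB'e | hB't
        · have hsub : I2 ⊆ I1 := by
            intro x hx
            by_contra hxI
            exact notMem_empty x (hB'e ▸ mem_sdiff.mpr ⟨hx, hxI⟩)
          rw [union_eq_left.mpr hsub]
          exact hindep1 I1 hI1.1 hI1.2
        · have hB'ne : I2 \ I1 ≠ ∅ := by
            intro h; rw [h, sum_empty, hu20] at hB't
            linarith
          have hunion2 : I1 ∪ I2 = I1 ∪ (I2 \ I1) := by
            rw [union_sdiff_self_eq_union]
          have h := merge_le E1 univ u1 u2 (I1 ∪ I2) hunion2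
            (disjoint_sdiff) hI1.1 (subset_univ _)
          have hne2 : I1 ∪ I2 ≠ ∅ := by
            intro hh
            apply hB'ne
            rw [eq_empty_iff_forall_notMem] at hh ⊢
            intro x hx
            exact hh x (mem_union_right _ (mem_sdiff.mp hx).1)
          rw [← hveq _, if_neg hne2, hI1.2, hB't] at h
          apply indep_of_rank_eq M w hw
          rw [← hρ]
          have hsum : ∑ i ∈ I1 ∪ I2, w i
              = (∑ i ∈ I1, w i) + ∑ i ∈ I2 \ I1, w i := by
            rw [hunion2, sum_union disjoint_sdiff]
          rw [hsum]
          linarith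
  -- conclude via irreducibility
  rcases hirr M1 M2 hunion with h | h
  · -- M1 = M is impossible
    have hE1univ : E1 = univ := by
      have := congrArg FinMatroid.E h
      rw [hM1, hE] at this
      exact this
    obtain ⟨Istar, hIstar, _, hIeq⟩ := rank_attain M w univ
    have hIne : Istar ≠ univ := fun hh => hnotfree (hh ▸ hIstar)
    obtain ⟨b0, hb0⟩ : ∃ b0, b0 ∉ Istar := by
      by_contra hcon; push_neg at hcon
      exact hIne (eq_univ_iff_forall.mpr hcon)
    have hIndeq : M.Indep Istar ↔ (Istar ⊆ E1 ∧ u1 Istar = ∑ i ∈ Istar, w i) := by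
      constructor
      · intro hh
        have := congrArg FinMatroid.Indep h
        rw [hM1] at this
        rw [← this] at hh
        exact hh
      · intro hh
        exact hindep1 _ hh.1 hh.2
    obtain ⟨_, hu1I⟩ := hIndeq.mp hIstar
    have hunion3 : insert b0 Istar = Istar ∪ {b0} := by
      rw [insert_eq, union_comm]
    have h4 := merge_le E1 univ u1 u2 (insert b0 Istar) hunion3
      (disjoint_singleton_right.mpr hb0) (hE1univ ▸ subset_univ Istar) (subset_univ _)
    rw [hu2 b0, ← hveq _, if_neg (insert_ne_empty _ _), hu1I] at h4
    have h5 : ρ (insert b0 Istar) ≤ ρ univ := by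
      rw [hρ]; exact rank_mono M w (subset_univ _)
    have h6 : ρ univ = ∑ i ∈ Istar, w i := by rw [hρ, hIeq]
    have := hw b0
    linarith
  · -- M2 = M gives u2 = v, contradiction
    apply hne
    funext S
    by_cases hS : S = ∅
    · rw [hS, if_pos rfl, hu20]
    · rw [if_neg hS]
      have hub := hu2le S hS
      obtain ⟨J, hJ, hJS, hJeq⟩ := rank_attain M w S
      have hJne : J.Nonempty :=
        attain_nonempty M w hw (nonempty_iff_ne_empty.mpr hS) (fun x _ => hloop x) hJeq
      have hJ2 : J = ∅ ∨ u2 J = (∑ i ∈ J, w i) + c := by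
        have := congrArg FinMatroid.Indep h
        rw [hM2] at this
        rw [← this] at hJ
        exact hJ
      have hJt : u2 J = (∑ i ∈ J, w i) + c := hJ2.resolve_left hJne.ne_empty
      have hmono : u2 J ≤ u2 S := hgs2.1.2.2 hJS (subset_univ S)
      have : ρ S = ∑ i ∈ J, w i := by rw [hρ, hJeq]
      linarith

end Core

/-- Splitting the origin off the weighted rank of a loopless irreducible
matroid of rank at least two (with positive, non-constant weights) produces a
gross substitutes valuation that is irreducible under merging. -/
theorem modified_weightedRank_gs_and_irreducible (n : ℕ)
    (M : FinMatroid (Fin n)) (hE : M.E = Finset.univ)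
    (hloopless : ∀ i : Fin n, M.Indep {i})
    (hrank2 : ∃ I : Finset (Fin n), M.Indep I ∧ 2 ≤ I.card)
    (hirr : MatroidIrreducible M)
    (w : Fin n → ℝ) (hw : ∀ i, 0 < w i) (hwnc : ∃ i j : Fin n, w i ≠ w j)
    (c : ℝ) (hc : 0 < c) :
    GrossSubstitutes (Finset.univ : Finset (Fin n))
        (fun S => if S = ∅ then 0 else weightedRank M w S + c) ∧
      IrreducibleVal
        (fun S : Finset (Fin n) =>
          if S = ∅ then 0 else weightedRank M w S + c) := by
  have hw' : ∀ i, 0 ≤ w i := fun i => (hw i).le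
  constructor
  · exact gs_of_shifted_rank M w hw hloopless c hc
  · intro E1 E2 u1 u2 hgs1 hgs2 hcover hveq
    by_contra hcon
    push_neg at hcon
    obtain ⟨hne1, hne2⟩ := hcon
    obtain ⟨i0, j0, hij⟩ := hwnc
    have hij' : i0 ≠ j0 := fun h => hij (h ▸ rfl)
    have hu10 : u1 ∅ = 0 := hgs1.1.1
    have hu20 : u2 ∅ = 0 := hgs2.1.1
    have hrsing : ∀ x : Fin n, weightedRank M w {x} = w x :=
      fun x => FinMatroid.rank_singleton M w hw' (hloopless x)
    -- each singleton is fully served on one side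
    have hsplit : ∀ i : Fin n,
        (i ∈ E1 ∧ u1 {i} = w i + c) ∨ (i ∈ E2 ∧ u2 {i} = w i + c) := by
      intro i
      obtain ⟨S1, S2, h1, h2, h3, h4, h5⟩ :=
        merge_attain E1 E2 u1 u2 {i} (by rw [hcover]; exact subset_univ _)
      have hval : u1 S1 + u2 S2 = w i + c := by
        have := congrFun hveq {i}
        rw [if_neg (singleton_ne_empty i), hrsing i] at this
        rw [← h5, ← this]
      have hS1 : S1 ⊆ {i} := h1 ▸ subset_union_left
      have hS2 : S2 ⊆ {i} := h1 ▸ subset_union_right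
      rcases subset_singleton_iff.mp hS1 with rfl | rfl
      · rcases subset_singleton_iff.mp hS2 with rfl | rfl
        · exfalso
          rw [empty_union] at h1
          exact (singleton_ne_empty i) h1
        · right
          refine ⟨h4 (mem_singleton_self i), ?_⟩
          rw [hu10] at hval
          linarith
      · rcases subset_singleton_iff.mp hS2 with rfl | rfl
        · left
          refine ⟨h3 (mem_singleton_self i), ?_⟩
          rw [hu20] at hval
          linarith
        · exfalso
          exact (disjoint_left.mp h2 (mem_singleton_self i)) (mem_singleton_self i)
    -- full-value singletons on opposite sides must coincide
    have hcross : ∀ p q : Fin n, p ≠ q →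
        (p ∈ E1 ∧ u1 {p} = w p + c) → (q ∈ E2 ∧ u2 {q} = w q + c) → False := by
      rintro p q hpq ⟨hp1, hp2⟩ ⟨hq1, hq2⟩
      have hun : ({p, q} : Finset (Fin n)) = {p} ∪ {q} := by
        ext x; simp [mem_insert, mem_union]
      have h := merge_le E1 E2 u1 u2 {p, q} hun
        (disjoint_singleton.mpr hpq)
        (singleton_subset_iff.mpr hp1) (singleton_subset_iff.mpr hq1)
      have hvpq := congrFun hveq ({p, q} : Finset (Fin n))
      rw [if_neg (insert_ne_empty _ _)] at hvpq
      rw [← hvpq, hp2, hq2] at h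
      have hle : weightedRank M w {p, q} ≤ w p + w q := by
        have := FinMatroid.rank_le_sum M w hw' {p, q}
        rwa [sum_pair hpq] at this
      linarith
    by_cases hall2 : ∀ i : Fin n, i ∈ E2 ∧ u2 {i} = w i + c
    · -- E2 = univ, all u2-singletons full: core lemma gives v = u2
      have hE2 : E2 = univ := eq_univ_iff_forall.mpr (fun i => (hall2 i).1)
      apply hne2
      exact core_lemma M hE hloopless hirr w hw hij' c hc E1 u1 u2 hgs1
        (hE2 ▸ hgs2)
        (fun S => by rw [← hE2]; exact congrFun hveq S)
        (fun i => (hall2 i).2)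
    · push_neg at hall2
      obtain ⟨i1, hi1⟩ := hall2
      have hi1side1 : i1 ∈ E1 ∧ u1 {i1} = w i1 + c := by
        rcases hsplit i1 with h | h
        · exact h
        · exact absurd h.2 (hi1 h.1)
      have hside1 : ∀ j : Fin n, j ∈ E1 ∧ u1 {j} = w j + c := by
        intro j
        rcases hsplit j with h | h
        · exact h
        · have hnej : i1 ≠ j := fun hh =>
            (hi1 (by rw [hh]; exact h.1)) (by rw [hh]; exact h.2)
          exact (hcross i1 j hnej hi1side1 h).elim
      have hE1 : E1 = univ := eq_univ_iff_forall.mpr (fun j => (hside1 j).1)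
      apply hne1
      exact core_lemma M hE hloopless hirr w hw hij' c hc E2 u2 u1 hgs2
        (hE1 ▸ hgs1)
        (fun S => by
          rw [← hE1, ← merge_comm E1 E2 u1 u2]
          exact congrFun hveq S)
        (fun i => (hside1 i).2)
end

section
/- Let M be a loopless matroid on ground set [n] of rank at least 2 that is irreducible under matroid union, let w ∈ ℝ^n with w_i > 0 for all i and with w not a constant multiple of the all-ones vector, and let c > 0. Define v : 2^{[n]} → ℝ by v(∅) = 0 and v(S) = ρ^w(S) + c for all nonempty S ⊆ [n], where ρ^w is the weighted matroid rank valuation of M. Then: (a) there is no matroid M' on [n] and weight vector w' ∈ ℝ^n_{≥0} such that v equals the weighted matroid rank valuation of M' with weight w'; and (b) there is no set partition π of [n] and reals 0 < a < b < 2a such that v equals the partition valuation v^{π,a,b}. -/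
open Finset

variable {α : Type*} [DecidableEq α]

/-- The partition valuation `v^{π,a,b}`: value `0` at `∅`, value `a` on nonempty
sets contained in a single part of `π`, and value `b` otherwise. -/
noncomputable def partitionVal {E : Finset α} (π : Finpartition E) (a b : ℝ)
    (I : Finset α) : ℝ :=
  if I = ∅ then 0 else if ∃ p ∈ π.parts, I ⊆ p then a else b

lemma wrSet_finite (M : FinMatroid α) (w : α → ℝ) (T : Finset α) :
    {x : ℝ | ∃ I : Finset α, M.Indep I ∧ I ⊆ T ∧ x = ∑ i ∈ I, w i}.Finite := by
  apply Set.Finite.subset (Set.finite_range (fun I : T.powerset => ∑ i ∈ (I : Finset α), w i))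
  rintro x ⟨I, _, hIT, rfl⟩
  exact ⟨⟨I, Finset.mem_powerset.mpr hIT⟩, rfl⟩

lemma wrSet_nonempty (M : FinMatroid α) (w : α → ℝ) (T : Finset α) :
    {x : ℝ | ∃ I : Finset α, M.Indep I ∧ I ⊆ T ∧ x = ∑ i ∈ I, w i}.Nonempty :=
  ⟨0, ∅, M.indep_empty, Finset.empty_subset _, by simp⟩

lemma wr_mem (M : FinMatroid α) (w : α → ℝ) (T : Finset α) :
    ∃ I : Finset α, M.Indep I ∧ I ⊆ T ∧ weightedRank M w T = ∑ i ∈ I, w i :=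
  (wrSet_nonempty M w T).csSup_mem (wrSet_finite M w T)

lemma le_wr (M : FinMatroid α) (w : α → ℝ) {T I : Finset α}
    (hI : M.Indep I) (hIT : I ⊆ T) : ∑ i ∈ I, w i ≤ weightedRank M w T :=
  le_csSup (wrSet_finite M w T).bddAbove ⟨I, hI, hIT, rfl⟩

lemma wr_le (M : FinMatroid α) (w : α → ℝ) (T : Finset α) {B : ℝ}
    (hB : ∀ I : Finset α, M.Indep I → I ⊆ T → ∑ i ∈ I, w i ≤ B) :
    weightedRank M w T ≤ B :=
  csSup_le (wrSet_nonempty M w T) (by rintro x ⟨I, h1, h2, rfl⟩; exact hB I h1 h2)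

lemma wr_singleton (M : FinMatroid α) (w : α → ℝ) {i : α} (hi : M.Indep {i})
    (hwi : 0 ≤ w i) : weightedRank M w {i} = w i := by
  refine le_antisymm (wr_le M w _ ?_) ?_
  · intro I _ hIT
    rcases Finset.subset_singleton_iff.mp hIT with rfl | rfl <;> simp [hwi]
  · simpa using le_wr M w hi (Finset.Subset.refl _)

lemma wr_pair (M : FinMatroid α) (w : α → ℝ) {i j : α} (hij : i ≠ j)
    (hind : M.Indep {i, j}) (hw : ∀ k, 0 ≤ w k) :
    weightedRank M w {i, j} = w i + w j := by
  refine le_antisymm (wr_le M w _ ?_) ?_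
  · intro I _ hIT
    calc ∑ k ∈ I, w k ≤ ∑ k ∈ ({i, j} : Finset α), w k :=
          Finset.sum_le_sum_of_subset_of_nonneg hIT (fun k _ _ => hw k)
      _ = w i + w j := Finset.sum_pair hij
  · have := le_wr M w hind (Finset.Subset.refl _)
    rwa [Finset.sum_pair hij] at this

lemma subset_pair' {i j : α} {I : Finset α} (h : I ⊆ {i, j}) :
    I = ∅ ∨ I = {i} ∨ I = {j} ∨ I = {i, j} := by
  by_cases hi : i ∈ I <;> by_cases hj : j ∈ I
  · right; right; right
    exact Finset.Subset.antisymm h (Finset.insert_subset hi (Finset.singleton_subset_iff.2 hj))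
  · right; left
    refine Finset.Subset.antisymm ?_ (Finset.singleton_subset_iff.2 hi)
    intro x hx
    rcases Finset.mem_insert.1 (h hx) with rfl | hx'
    · exact Finset.mem_singleton_self x
    · exact absurd (Finset.mem_singleton.1 hx' ▸ hx) hj
  · right; right; left
    refine Finset.Subset.antisymm ?_ (Finset.singleton_subset_iff.2 hj)
    intro x hx
    rcases Finset.mem_insert.1 (h hx) with rfl | hx'
    · exact absurd hx hi
    · exact hx'
  · left
    refine Finset.eq_empty_of_forall_notMem fun x hx => ?_
    rcases Finset.mem_insert.1 (h hx) with rfl | hx'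
    · exact hi hx
    · exact hj (Finset.mem_singleton.1 hx' ▸ hx)

/-- The modified weighted rank valuation of Proposition 4.5 is neither a
weighted matroid rank valuation nor a partition valuation. -/
theorem modified_weightedRank_not_wrank_not_partition (n : ℕ)
    (M : FinMatroid (Fin n)) (hE : M.E = Finset.univ)
    (hloopless : ∀ i : Fin n, M.Indep {i})
    (hrank2 : ∃ I : Finset (Fin n), M.Indep I ∧ 2 ≤ I.card)
    (hirr : MatroidIrreducible M)
    (w : Fin n → ℝ) (hw : ∀ i, 0 < w i) (hwnc : ∃ i j : Fin n, w i ≠ w j)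
    (c : ℝ) (hc : 0 < c) :
    (¬ ∃ (M' : FinMatroid (Fin n)) (w' : Fin n → ℝ),
        M'.E = Finset.univ ∧ (∀ i, 0 ≤ w' i) ∧
        (fun S : Finset (Fin n) =>
            if S = ∅ then 0 else weightedRank M w S + c) =
          weightedRank M' w') ∧
    ¬ ∃ (π : Finpartition (Finset.univ : Finset (Fin n))) (a b : ℝ),
        0 < a ∧ a < b ∧ b < 2 * a ∧
        (fun S : Finset (Fin n) =>
            if S = ∅ then 0 else weightedRank M w S + c) =
          partitionVal π a b := by
  obtain ⟨I₀, hI₀, hcard⟩ := hrank2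
  obtain ⟨i, hi, j, hj, hij⟩ := Finset.one_lt_card.mp (show 1 < I₀.card by omega)
  have hpairI : ({i, j} : Finset (Fin n)) ⊆ I₀ :=
    Finset.insert_subset hi (Finset.singleton_subset_iff.2 hj)
  have hpair : M.Indep {i, j} := M.indep_subset hI₀ hpairI
  have hwr_pair : weightedRank M w {i, j} = w i + w j :=
    wr_pair M w hij hpair (fun k => (hw k).le)
  have hwr_single : ∀ k : Fin n, weightedRank M w {k} = w k :=
    fun k => wr_singleton M w (hloopless k) (hw k).le
  constructor
  · rintro ⟨M', w', _, hw', heq⟩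
    -- value at singletons
    have hsing : ∀ k : Fin n, w' k = w k + c := by
      intro k
      have h1 : weightedRank M' w' {k} = w k + c := by
        have := congrFun heq ({k} : Finset (Fin n))
        simp only [Finset.singleton_ne_empty, if_neg, ite_false] at this
        rw [← this, hwr_single k]
      obtain ⟨I, _, hIT, hval⟩ := wr_mem M' w' {k}
      rcases Finset.subset_singleton_iff.mp hIT with rfl | rfl
      · simp only [Finset.sum_empty] at hval
        rw [h1] at hval
        nlinarith [hw k]
      · simp only [Finset.sum_singleton] at hval
        rw [h1] at hval
        linarith
    have h2 : weightedRank M' w' {i, j} = w i + w j + c := by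
      have := congrFun heq ({i, j} : Finset (Fin n))
      simp only [Finset.insert_ne_empty, if_neg, ite_false] at this
      rw [← this, hwr_pair]
    obtain ⟨I, _, hIT, hval⟩ := wr_mem M' w' {i, j}
    rw [h2] at hval
    rcases subset_pair' hIT with rfl | rfl | rfl | rfl
    · simp only [Finset.sum_empty] at hval
      nlinarith [hw i, hw j]
    · rw [Finset.sum_singleton, hsing i] at hval
      nlinarith [hw j]
    · rw [Finset.sum_singleton, hsing j] at hval
      nlinarith [hw i]
    · rw [Finset.sum_pair hij, hsing i, hsing j] at hval
      linarith
  · rintro ⟨π, a, b, ha, hab, hba, heq⟩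
    obtain ⟨x, y, hxy⟩ := hwnc
    have key : ∀ k : Fin n, w k + c = a := by
      intro k
      have := congrFun heq ({k} : Finset (Fin n))
      simp only [Finset.singleton_ne_empty, ite_false] at this
      rw [hwr_single k] at this
      rw [this, partitionVal, if_neg (Finset.singleton_ne_empty k)]
      obtain ⟨p, hp, hkp⟩ := π.exists_mem (Finset.mem_univ k)
      rw [if_pos ⟨p, hp, Finset.singleton_subset_iff.2 hkp⟩]
    have := key x
    have := key y
    exact hxy (by linarith)
end

section
/- Let 1 ≤ n ≤ 5 and let M be a loopless matroid on ground set [n] that is irreducible under matroid union. Then M is the uniform matroid U_{1,[n]} of rank 1 on [n], i.e., the independent sets of M are exactly the empty set and the singletons of [n]. -/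
open Finset

variable {α : Type*} [DecidableEq α]

/-!
If `M` has an independent pair, we write it as a union of two matroids different from `M`.
A separator `A` (with `r A + r Aᶜ = r M`) gives `M = M|A ∨ M|Aᶜ`, so `M` is connected. Every other
decomposition has the form `N ∨ U_{1,S}` with `N` of smaller rank: `U_{r-1,n} ∨ U_{1,n}` when `M`
is uniform of rank `r`; `U_{1,Qᶜ} ∨ U_{1,Pᶜ}` in rank 2, where `P` and `Q` contain the nontrivial
parallel classes (there are at most two of them since `n ≤ 5`); and in the one remaining case, a
connected rank-3 matroid on five elements with a three-point line `T`, the rank-2 truncation of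
`M` in which the closure of `Tᶜ` becomes a parallel class, together with `U_{1,Tᶜ}`.
-/

theorem Finset.eq_empty_or_eq_singleton_of_card_le_one {β : Type*} {s : Finset β} (h : s.card ≤ 1) :
    s = ∅ ∨ ∃ a, s = {a} := by
  rcases Nat.le_one_iff_eq_zero_or_eq_one.1 h with h | h
  exacts [Or.inl (card_eq_zero.1 h), Or.inr (card_eq_one.1 h)]

theorem Equivalence.exists_two_classes_of_card_le_five [Fintype α] {r : α → α → Prop}
    (hr : Equivalence r) (hα : Fintype.card α ≤ 5) :
    ∃ P Q : Finset α, Disjoint P Q ∧ ∀ x y, x ≠ y → (r x y ↔ x ∈ P ∧ y ∈ P ∨ x ∈ Q ∧ y ∈ Q) := by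
  classical
  let cls (x : α) : Finset α := univ.filter (r x)
  have mem_cls {x y : α} : y ∈ cls x ↔ r x y := by simp [cls]
  have two_le_card {x y : α} (hxy : x ≠ y) (h : r x y) : 2 ≤ (cls x).card := by
    have : {x, y} ⊆ cls x := by simp [insert_subset_iff, mem_cls, hr.refl, h]
    simpa [card_pair hxy] using card_le_card this
  have disj {x y : α} (h : ¬ r x y) : Disjoint (cls x) (cls y) :=
    disjoint_left.2 fun z hx hy => h (hr.trans (mem_cls.1 hx) (hr.symm (mem_cls.1 hy)))
  by_cases h₁ : ∃ x y, x ≠ y ∧ r x y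
  swap
  · push Not at h₁
    exact ⟨∅, ∅, disjoint_empty_left _, fun x y hxy => by simp [h₁ x y hxy]⟩
  obtain ⟨x₀, y₀, hxy₀, h₀⟩ := h₁
  by_cases h₂ : ∃ u v, u ≠ v ∧ r u v ∧ ¬ r x₀ u
  swap
  · push Not at h₂
    refine ⟨cls x₀, ∅, disjoint_empty_right _, fun x y hxy => ?_⟩
    simp only [mem_cls, notMem_empty, and_false, or_false]
    exact ⟨fun h => ⟨h₂ x y hxy h, hr.trans (h₂ x y hxy h) h⟩,
      fun h => hr.trans (hr.symm h.1) h.2⟩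
  obtain ⟨u₀, v₀, huv₀, hu₀, hxu₀⟩ := h₂
  refine ⟨cls x₀, cls u₀, disj hxu₀, fun x y hxy => ⟨fun h => ?_, ?_⟩⟩
  · simp only [mem_cls]
    by_contra hxPQ
    have hx₀ : ¬ r x₀ x := fun hx => hxPQ (Or.inl ⟨hx, hr.trans hx h⟩)
    have hu : ¬ r u₀ x := fun hx => hxPQ (Or.inr ⟨hx, hr.trans hx h⟩)
    have hcard := card_le_univ (cls x₀ ∪ cls u₀ ∪ cls x)
    rw [card_union_of_disjoint (disjoint_union_left.2 ⟨disj hx₀, disj hu⟩),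
      card_union_of_disjoint (disj hxu₀)] at hcard
    have := two_le_card hxy₀ h₀
    have := two_le_card huv₀ hu₀
    have := two_le_card hxy h
    omega
  · rintro (⟨hx, hy⟩ | ⟨hx, hy⟩) <;> exact hr.trans (hr.symm (mem_cls.1 hx)) (mem_cls.1 hy)

namespace FinMatroid

variable {M N : FinMatroid α} {I T W X Y : Finset α} {e s : α}

open scoped Classical in
noncomputable def rk (M : FinMatroid α) (X : Finset α) : ℕ :=
  (X.powerset.filter M.Indep).sup card

theorem exists_indep_subset_card_eq_rk (M : FinMatroid α) (X : Finset α) :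
    ∃ B ⊆ X, M.Indep B ∧ B.card = M.rk X := by
  classical
  obtain ⟨B, hB, hBc⟩ := exists_mem_eq_sup (X.powerset.filter M.Indep)
    ⟨∅, mem_filter.2 ⟨empty_mem_powerset X, M.indep_empty⟩⟩ card
  rw [mem_filter, mem_powerset] at hB
  exact ⟨B, hB.1, hB.2, by rw [rk]; convert hBc.symm⟩

theorem card_le_rk (hI : M.Indep I) (hIX : I ⊆ X) : I.card ≤ M.rk X := by
  classical
  exact le_sup (f := card) (mem_filter.2 ⟨mem_powerset.2 hIX, hI⟩)

theorem rk_mono (h : X ⊆ Y) : M.rk X ≤ M.rk Y := by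
  obtain ⟨B, hBX, hB, hBc⟩ := M.exists_indep_subset_card_eq_rk X
  exact hBc ▸ card_le_rk hB (hBX.trans h)

theorem rk_le_card (M : FinMatroid α) (X : Finset α) : M.rk X ≤ X.card := by
  obtain ⟨B, hBX, -, hBc⟩ := M.exists_indep_subset_card_eq_rk X
  exact hBc ▸ card_le_card hBX

theorem rk_eq_card_of_indep (hI : M.Indep I) : M.rk I = I.card :=
  (M.rk_le_card I).antisymm (card_le_rk hI subset_rfl)

theorem indep_of_card_le_rk (h : X.card ≤ M.rk X) : M.Indep X := by
  obtain ⟨B, hBX, hB, hBc⟩ := M.exists_indep_subset_card_eq_rk X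
  rwa [← eq_of_subset_of_card_le hBX (hBc ▸ h)]

theorem exists_indep_superset_card_eq_rk (hI : M.Indep I) (hIX : I ⊆ X) :
    ∃ B, I ⊆ B ∧ B ⊆ X ∧ M.Indep B ∧ B.card = M.rk X := by
  classical
  obtain ⟨B, hB, hmax⟩ := (X.powerset.filter fun B => I ⊆ B ∧ M.Indep B).exists_max_image card
    ⟨I, by simp [hIX, hI]⟩
  simp only [mem_filter, mem_powerset] at hB hmax
  obtain ⟨hBX, hIB, hB⟩ := hB
  refine ⟨B, hIB, hBX, hB, (card_le_rk hB hBX).antisymm (not_lt.1 fun hlt => ?_)⟩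
  obtain ⟨J, hJX, hJ, hJc⟩ := M.exists_indep_subset_card_eq_rk X
  obtain ⟨e, heJ, heB, he⟩ := M.indep_aug hB hJ (hJc ▸ hlt)
  have := hmax _ ⟨insert_subset (hJX heJ) hBX, hIB.trans (subset_insert e B), he⟩
  rw [card_insert_of_notMem heB] at this
  omega

theorem rk_union_add_rk_inter_le (M : FinMatroid α) (X Y : Finset α) :
    M.rk (X ∪ Y) + M.rk (X ∩ Y) ≤ M.rk X + M.rk Y := by
  obtain ⟨B₀, hB₀, hB₀i, hB₀c⟩ := M.exists_indep_subset_card_eq_rk (X ∩ Y)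
  obtain ⟨B, hB₀B, hB, hBi, hBc⟩ :=
    exists_indep_superset_card_eq_rk hB₀i (hB₀.trans inter_subset_union)
  have hX : (B ∩ X).card ≤ M.rk X :=
    card_le_rk (M.indep_subset hBi inter_subset_left) inter_subset_right
  have hY : (B ∩ Y).card ≤ M.rk Y :=
    card_le_rk (M.indep_subset hBi inter_subset_left) inter_subset_right
  have hXY : B₀.card ≤ (B ∩ X ∩ (B ∩ Y)).card :=
    card_le_card fun x hx => by simp [hB₀B hx, (mem_inter.1 (hB₀ hx)).1, (mem_inter.1 (hB₀ hx)).2]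
  have hB' : B ∩ X ∪ B ∩ Y = B := by rw [← inter_union_distrib_left, inter_eq_left.2 hB]
  have := card_union_add_card_inter (B ∩ X) (B ∩ Y)
  rw [hB'] at this
  omega

theorem rk_insert_eq_of_subset (hXY : X ⊆ Y) (h : M.rk (insert e X) = M.rk X) :
    M.rk (insert e Y) = M.rk Y := by
  have := M.rk_union_add_rk_inter_le Y (insert e X)
  have hX : X ⊆ Y ∩ insert e X := subset_inter hXY (subset_insert e X)
  rw [union_insert, union_eq_left.2 hXY, h] at this
  have := rk_mono (M := M) hX
  have := rk_mono (M := M) (subset_insert e Y)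
  omega

theorem rk_union_eq_of_forall_rk_insert_eq (h : ∀ e ∈ Y, M.rk (insert e X) = M.rk X) :
    M.rk (X ∪ Y) = M.rk X := by
  induction Y using Finset.induction_on with
  | empty => rw [union_empty]
  | insert e Y _ ih =>
    have ih := ih fun x hx => h x (mem_insert_of_mem hx)
    rw [union_insert, rk_insert_eq_of_subset subset_union_left (h e (mem_insert_self e Y)), ih]

theorem indep_insert_of_rk_lt_rk_insert (hI : M.Indep I) (hIX : I ⊆ X)
    (h : M.rk X < M.rk (insert e X)) : M.Indep (insert e I) := by
  by_cases heI : e ∈ I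
  · rwa [insert_eq_of_mem heI]
  refine M.indep_of_card_le_rk (not_lt.1 fun hlt => h.ne' (rk_insert_eq_of_subset hIX ?_))
  have := rk_mono (M := M) (subset_insert e I)
  rw [card_insert_of_notMem heI] at hlt
  rw [rk_eq_card_of_indep hI] at this ⊢
  omega

theorem ne_of_forall_indep_card_lt (h : ∀ I, N.Indep I → I.card < M.rk X) : N ≠ M := by
  rintro rfl
  obtain ⟨B, -, hB, hBc⟩ := N.exists_indep_subset_card_eq_rk X
  exact (h B hB).ne hBc

def restrict (M : FinMatroid α) (A : Finset α) : FinMatroid α where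
  E := A
  Indep I := M.Indep I ∧ I ⊆ A
  indep_empty := ⟨M.indep_empty, empty_subset A⟩
  indep_subset _ _ hJ hIJ := ⟨M.indep_subset hJ.1 hIJ, hIJ.trans hJ.2⟩
  indep_aug _ _ hI hJ hlt := by
    obtain ⟨e, heJ, heI, he⟩ := M.indep_aug hI.1 hJ.1 hlt
    exact ⟨e, heJ, heI, he, insert_subset (hJ.2 heJ) hI.2⟩
  subset_ground _ hI := hI.2

def unifOn (E : Finset α) (k : ℕ) : FinMatroid α where
  E := E
  Indep I := I ⊆ E ∧ I.card ≤ k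
  indep_empty := ⟨empty_subset E, by simp⟩
  indep_subset _ _ hJ hIJ := ⟨hIJ.trans hJ.1, (card_le_card hIJ).trans hJ.2⟩
  indep_aug I J hI hJ hlt := by
    obtain ⟨e, heJ, heI⟩ := exists_mem_notMem_of_card_lt_card hlt
    refine ⟨e, heJ, heI, insert_subset (hJ.1 heJ) hI.1, ?_⟩
    rw [card_insert_of_notMem heI]
    omega
  subset_ground _ hI := hI.1

def Parallel (M : FinMatroid α) (x y : α) : Prop := x = y ∨ ¬ M.Indep {x, y}

theorem parallel_equivalence (hl : ∀ x, M.Indep {x}) : Equivalence M.Parallel where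
  refl _ := Or.inl rfl
  symm := by
    rintro x y (rfl | h)
    exacts [Or.inl rfl, Or.inr (by rwa [pair_comm])]
  trans := by
    rintro x y z (rfl | hxy) (rfl | hyz)
    · exact Or.inl rfl
    · exact Or.inr hyz
    · exact Or.inr hxy
    refine or_iff_not_imp_left.2 fun hxz hind => ?_
    obtain ⟨w, hw, hwy, hyw⟩ := M.indep_aug (hl y) hind (by simp [card_pair hxz])
    rw [mem_singleton] at hwy
    rcases mem_insert.1 hw with rfl | hw
    · exact hxy hyw
    · rw [mem_singleton.1 hw] at hyw
      exact hyz (by rwa [pair_comm])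

section Fintype

variable [Fintype α]

noncomputable def closure (M : FinMatroid α) (X : Finset α) : Finset α :=
  univ.filter fun x => M.rk (insert x X) = M.rk X

theorem mem_closure : e ∈ M.closure X ↔ M.rk (insert e X) = M.rk X := by
  simp [closure]

theorem subset_closure (M : FinMatroid α) (X : Finset α) : X ⊆ M.closure X :=
  fun x hx => mem_closure.2 (by rw [insert_eq_of_mem hx])

theorem rk_closure (M : FinMatroid α) (X : Finset α) : M.rk (M.closure X) = M.rk X := by
  rw [← union_eq_right.2 (M.subset_closure X)]
  exact rk_union_eq_of_forall_rk_insert_eq fun e he => mem_closure.1 he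

theorem rk_closure_lt_rk_insert (he : e ∉ M.closure X) :
    M.rk (M.closure X) < M.rk (insert e (M.closure X)) := by
  have h₁ : M.rk (insert e X) ≠ M.rk X := fun h => he (mem_closure.2 h)
  have h₂ := M.rk_mono (subset_insert e X)
  have h₃ := M.rk_mono (insert_subset_insert e (M.subset_closure X))
  rw [rk_closure]
  omega

/-- The rank-2 truncation of `M` in which the closure of `X` becomes a parallel class. -/
noncomputable def truncCollapse (M : FinMatroid α) (X : Finset α) (hl : ∀ x, M.Indep {x}) :
    FinMatroid α where
  E := M.E
  Indep I := M.Indep I ∧ I.card ≤ 2 ∧ (I.card ≤ 1 ∨ ¬ I ⊆ M.closure X)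
  indep_empty := ⟨M.indep_empty, by simp, by simp⟩
  indep_subset I J hJ hIJ := by
    obtain ⟨hJ, hJ2, hJF⟩ := hJ
    have hcard := card_le_card hIJ
    refine ⟨M.indep_subset hJ hIJ, hcard.trans hJ2, ?_⟩
    rcases Nat.lt_or_ge I.card 2 with h | h
    · exact Or.inl (by omega)
    · rwa [eq_of_subset_of_card_le hIJ (by omega)]
  indep_aug I J hI hJ hlt := by
    obtain ⟨hI, -, -⟩ := hI
    obtain ⟨hJ, hJ2, hJF⟩ := hJ
    rcases eq_empty_or_eq_singleton_of_card_le_one (show I.card ≤ 1 by omega) with rfl | ⟨x, rfl⟩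
    · obtain ⟨e, he⟩ := card_pos.1 hlt
      exact ⟨e, he, notMem_empty e, M.indep_subset hJ (by simpa), by simp, by simp⟩
    have hJF : ¬ J ⊆ M.closure X := hJF.resolve_left (by rw [card_singleton] at hlt; omega)
    by_cases hx : x ∈ M.closure X
    · obtain ⟨e, heJ, heF⟩ := not_subset.1 hJF
      refine ⟨e, heJ, fun h => heF (mem_singleton.1 h ▸ hx), ?_,
        (card_insert_le _ _).trans (by simp), Or.inr fun h => heF (h (mem_insert_self e {x}))⟩
      exact M.indep_insert_of_rk_lt_rk_insert (hl x) (singleton_subset_iff.2 hx)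
        (rk_closure_lt_rk_insert heF)
    · obtain ⟨e, heJ, hex, he⟩ := M.indep_aug hI hJ hlt
      exact ⟨e, heJ, hex, he, (card_insert_le _ _).trans (by simp),
        Or.inr fun h => hx (h (mem_insert_of_mem (mem_singleton_self x)))⟩
  subset_ground _ hI := M.subset_ground hI.1

def Connected (M : FinMatroid α) : Prop :=
  ∀ A : Finset α, A.Nonempty → Aᶜ.Nonempty → M.rk univ < M.rk A + M.rk Aᶜ

theorem Connected.rk_univ_lt_rk_add_card_compl (hM : M.Connected) {A : Finset α}
    (hA : A.Nonempty) (hAc : Aᶜ.Nonempty) : M.rk univ < M.rk A + Aᶜ.card :=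
  (hM A hA hAc).trans_le (Nat.add_le_add_left (M.rk_le_card _) _)

end Fintype

/-- Two applications of submodularity show that `r(I₁ ∪ I₂) ≥ |I₁| + |I₂|`. -/
theorem isMatroidUnion_restrict_compl [Fintype α] (hE : M.E = univ) {A : Finset α}
    (hA : M.rk A + M.rk Aᶜ ≤ M.rk univ) : IsMatroidUnion M (M.restrict A) (M.restrict Aᶜ) := by
  refine ⟨by simp [hE, restrict], fun I => ⟨fun hI => ?_, ?_⟩⟩
  · refine ⟨I ∩ A, I ∩ Aᶜ, ⟨M.indep_subset hI inter_subset_left, inter_subset_right⟩,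
      ⟨M.indep_subset hI inter_subset_left, inter_subset_right⟩, ?_⟩
    rw [← inter_union_distrib_left, union_compl, inter_univ]
  rintro ⟨I₁, I₂, ⟨hI₁, hI₁A⟩, ⟨hI₂, hI₂A⟩, rfl⟩
  have hdisj : Disjoint I₁ I₂ :=
    disjoint_of_subset_left hI₁A (disjoint_of_subset_right hI₂A disjoint_compl_right)
  have h₁ := M.rk_union_add_rk_inter_le (I₁ ∪ I₂) A
  have h₂ := M.rk_union_add_rk_inter_le (A ∪ I₂) Aᶜ
  have e₁ : (I₁ ∪ I₂) ∪ A = A ∪ I₂ := by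
    rw [union_comm, ← union_assoc, union_eq_left.2 hI₁A]
  have e₂ : (I₁ ∪ I₂) ∩ A = I₁ := by
    rw [union_inter_distrib_right, inter_eq_left.2 hI₁A,
      disjoint_iff_inter_eq_empty.1 (disjoint_of_subset_left hI₂A disjoint_compl_left),
      union_empty]
  have e₃ : (A ∪ I₂) ∪ Aᶜ = univ := by
    rw [union_right_comm, union_compl, union_eq_left.2 (subset_univ I₂)]
  have e₄ : (A ∪ I₂) ∩ Aᶜ = I₂ := by
    rw [union_inter_distrib_right, inter_compl, empty_union, inter_eq_left.2 hI₂A]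
  rw [e₁, e₂, rk_eq_card_of_indep hI₁] at h₁
  rw [e₃, e₄, rk_eq_card_of_indep hI₂] at h₂
  refine M.indep_of_card_le_rk ?_
  rw [card_union_of_disjoint hdisj]
  omega

theorem isMatroidUnion_unifOn_one {S : Finset α} (hE : M.E = N.E ∪ S)
    (hN : ∀ I, N.Indep I → M.Indep I) (hNS : ∀ I, N.Indep I → ∀ s ∈ S, M.Indep (insert s I))
    (hM : ∀ I, M.Indep I → N.Indep I ∨ ∃ s ∈ I, s ∈ S ∧ N.Indep (I.erase s)) :
    IsMatroidUnion M N (unifOn S 1) := by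
  refine ⟨hE, fun I => ⟨fun hI => ?_, ?_⟩⟩
  · rcases hM I hI with h | ⟨s, hsI, hsS, h⟩
    · exact ⟨I, ∅, h, ⟨empty_subset S, by simp⟩, (union_empty I).symm⟩
    · refine ⟨I.erase s, {s}, h, ⟨singleton_subset_iff.2 hsS, (card_singleton s).le⟩, ?_⟩
      rw [union_comm, ← insert_eq, insert_erase hsI]
  · rintro ⟨I₁, I₂, hI₁, ⟨hI₂S, hI₂⟩, rfl⟩
    rcases eq_empty_or_eq_singleton_of_card_le_one hI₂ with rfl | ⟨s, rfl⟩
    · simpa using hN I₁ hI₁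
    · rw [union_comm, ← insert_eq]
      exact hNS I₁ hI₁ s (hI₂S (mem_singleton_self s))

theorem isMatroidUnion_unifOn_unifOn [Fintype α] {k : ℕ} (hE : M.E = univ)
    (hM : ∀ I, M.Indep I ↔ I.card ≤ k + 1) :
    IsMatroidUnion M (unifOn univ k) (unifOn univ 1) := by
  refine isMatroidUnion_unifOn_one (by simp [hE, unifOn]) (fun I hI => ?_) (fun I hI s _ => ?_)
    fun I hI => ?_
  · exact (hM I).2 (hI.2.trans k.le_succ)
  · exact (hM _).2 ((card_insert_le s I).trans (Nat.succ_le_succ hI.2))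
  by_cases hIk : I.card ≤ k
  · exact Or.inl ⟨subset_univ I, hIk⟩
  obtain ⟨s, hs⟩ := card_pos.1 (show 0 < I.card by omega)
  refine Or.inr ⟨s, hs, mem_univ s, subset_univ _, ?_⟩
  rw [card_erase_of_mem hs]
  have := (hM I).1 hI
  omega

theorem isMatroidUnion_of_parallel_classes [Fintype α] (hE : M.E = univ)
    (hl : ∀ x, M.Indep {x}) (h2 : ∀ I, M.Indep I → I.card ≤ 2) {P Q : Finset α}
    (hPQ : Disjoint P Q)
    (hpar : ∀ x y, x ≠ y → (M.Parallel x y ↔ x ∈ P ∧ y ∈ P ∨ x ∈ Q ∧ y ∈ Q)) :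
    IsMatroidUnion M (unifOn Qᶜ 1) (unifOn Pᶜ 1) := by
  have hdisj (x : α) : ¬ (x ∈ P ∧ x ∈ Q) := fun h => disjoint_left.1 hPQ h.1 h.2
  have hpair {x y : α} (hx : x ∉ Q) (hy : y ∉ P) : M.Indep {y, x} := by
    by_cases hxy : y = x
    · simpa [hxy] using hl x
    by_contra h
    have := (hpar y x hxy).1 (Or.inr h)
    tauto
  have herase {x y : α} (hxy : x ≠ y) (hx : x ∉ P) (hy : y ∉ Q) :
      ∃ s ∈ ({x, y} : Finset α), s ∈ Pᶜ ∧ (unifOn Qᶜ 1).Indep (({x, y} : Finset α).erase s) := by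
    refine ⟨x, mem_insert_self x {y}, mem_compl.2 hx, ?_⟩
    rw [erase_insert (notMem_singleton.2 hxy)]
    exact ⟨singleton_subset_iff.2 (mem_compl.2 hy), (card_singleton y).le⟩
  refine isMatroidUnion_unifOn_one ?_ ?_ ?_ fun I hI => ?_
  · rw [hE]
    exact (by rw [← compl_inter, disjoint_iff_inter_eq_empty.1 hPQ.symm, compl_empty] :
      univ = Qᶜ ∪ Pᶜ)
  · rintro I ⟨-, hI⟩
    rcases eq_empty_or_eq_singleton_of_card_le_one hI with rfl | ⟨x, rfl⟩
    exacts [M.indep_empty, hl x]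
  · rintro I ⟨hIQ, hI⟩ s hs
    rcases eq_empty_or_eq_singleton_of_card_le_one hI with rfl | ⟨x, rfl⟩
    · simpa using hl s
    · exact hpair (mem_compl.1 (hIQ (mem_singleton_self x))) (mem_compl.1 hs)
  rcases Nat.lt_or_ge I.card 2 with hI1 | hI2
  · by_cases hIQ : I ⊆ Qᶜ
    · exact Or.inl ⟨hIQ, by omega⟩
    obtain ⟨x, hxI, hxQ⟩ := not_subset.1 hIQ
    have hxQ : x ∈ Q := by simpa using hxQ
    have : I.erase x = ∅ := card_eq_zero.1 (by rw [card_erase_of_mem hxI]; omega)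
    exact Or.inr ⟨x, hxI, mem_compl.2 fun hxP => hdisj x ⟨hxP, hxQ⟩, by simp [this, unifOn]⟩
  obtain ⟨x, y, hxy, rfl⟩ := card_eq_two.1 ((h2 _ hI).antisymm hI2)
  have hnpar : ¬ M.Parallel x y := by rintro (h | h); exacts [hxy h, h hI]
  rw [hpar x y hxy] at hnpar
  have := hdisj x
  have := hdisj y
  by_cases h : x ∉ P ∧ y ∉ Q
  · exact Or.inr (herase hxy h.1 h.2)
  · rw [pair_comm]
    exact Or.inr (herase hxy.symm (by tauto) (by tauto))

structure LineConfiguration [Fintype α] (M : FinMatroid α) (T : Finset α) : Prop where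
  connected : M.Connected
  card_univ : Fintype.card α = 5
  rk_univ : M.rk univ = 3
  card_eq : T.card = 3
  rk_le : M.rk T ≤ 2

namespace LineConfiguration

variable [Fintype α]

theorem card_compl (h : LineConfiguration M T) : Tᶜ.card = 2 := by
  rw [Finset.card_compl, h.card_univ, h.card_eq]

theorem rk_compl (h : LineConfiguration M T) : M.rk Tᶜ = 2 := by
  have := h.connected T (card_pos.1 (by rw [h.card_eq]; norm_num))
    (card_pos.1 (by rw [h.card_compl]; norm_num))
  have := M.rk_le_card Tᶜ
  have := h.rk_le
  have := h.rk_univ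
  have := h.card_compl
  omega

theorem indep_compl (h : LineConfiguration M T) : M.Indep Tᶜ :=
  M.indep_of_card_le_rk (by rw [h.rk_compl, h.card_compl])

theorem three_le_rk (h : LineConfiguration M T) (hW : W.card = 4) : 3 ≤ M.rk W := by
  have hWc : Wᶜ.card = 1 := by rw [Finset.card_compl, h.card_univ, hW]
  have := h.connected.rk_univ_lt_rk_add_card_compl (A := W) (card_pos.1 (by omega))
    (card_pos.1 (by omega))
  have := h.rk_univ
  omega

theorem rk_lt_rk_insert (h : LineConfiguration M T) (hs : s ∉ T) :
    M.rk T < M.rk (insert s T) := by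
  have := h.three_le_rk (W := insert s T) (by rw [card_insert_of_notMem hs, h.card_eq])
  have := h.rk_le
  omega

theorem card_closure_compl_le (h : LineConfiguration M T) : (M.closure Tᶜ).card ≤ 3 := by
  by_contra hc
  obtain ⟨W, hW, hWc⟩ := exists_subset_card_eq (show 4 ≤ (M.closure Tᶜ).card by omega)
  have := h.three_le_rk hWc
  have := M.rk_mono hW
  rw [rk_closure, h.rk_compl] at this
  omega

theorem indep_insert (h : LineConfiguration M T) (hl : ∀ x, M.Indep {x})
    (hI : (M.truncCollapse Tᶜ hl).Indep I) (hs : s ∈ Tᶜ) : M.Indep (insert s I) := by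
  obtain ⟨hI, hI2, hIF⟩ := hI
  by_cases hIT : I ⊆ T
  · exact M.indep_insert_of_rk_lt_rk_insert hI hIT (h.rk_lt_rk_insert (mem_compl.1 hs))
  obtain ⟨u, huF, hIu⟩ : ∃ u ∉ M.closure Tᶜ, I ⊆ insert u Tᶜ := by
    by_cases hIG : I ⊆ Tᶜ
    · obtain ⟨u, -, hu⟩ := exists_mem_notMem_of_card_lt_card
        (show (M.closure Tᶜ).card < (univ : Finset α).card by
          rw [Finset.card_univ, h.card_univ]; have := h.card_closure_compl_le; omega)
      exact ⟨u, hu, hIG.trans (subset_insert u Tᶜ)⟩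
    obtain ⟨v, hvI, hvT⟩ := not_subset.1 hIT
    obtain ⟨u, huI, huG⟩ := not_subset.1 hIG
    have huv : u ≠ v := fun huv => huG (huv ▸ mem_compl.2 hvT)
    have hIuv : {u, v} = I :=
      eq_of_subset_of_card_le (insert_subset huI (singleton_subset_iff.2 hvI))
        (by rw [card_pair huv]; exact hI2)
    refine ⟨u, fun huF => ?_,
      hIuv ▸ insert_subset_insert u (singleton_subset_iff.2 (mem_compl.2 hvT))⟩
    rw [← hIuv, card_pair huv] at hIF
    exact hIF.resolve_left (by norm_num)
      (insert_subset huF (singleton_subset_iff.2 (M.subset_closure _ (mem_compl.2 hvT))))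
  exact M.indep_subset (M.indep_insert_of_rk_lt_rk_insert h.indep_compl (M.subset_closure _)
    (rk_closure_lt_rk_insert huF)) (insert_subset (mem_insert_of_mem hs) hIu)

theorem truncCollapse_indep_or (h : LineConfiguration M T) (hl : ∀ x, M.Indep {x})
    (hI : M.Indep I) : (M.truncCollapse Tᶜ hl).Indep I ∨
      ∃ s ∈ I, s ∈ Tᶜ ∧ (M.truncCollapse Tᶜ hl).Indep (I.erase s) := by
  by_cases hN : I.card ≤ 2 ∧ (I.card ≤ 1 ∨ ¬ I ⊆ M.closure Tᶜ)
  · exact Or.inl ⟨hI, hN⟩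
  have hI3 : I.card ≤ 3 := h.rk_univ ▸ M.card_le_rk hI (subset_univ I)
  -- otherwise `I ⊆ T`, so either `I = T` is dependent or `I ∪ Tᶜ` is a four-element subset
  -- of the closure of `Tᶜ`
  obtain ⟨s, hsI, hsG⟩ : ∃ s ∈ I, s ∈ Tᶜ := by
    by_contra! hIG
    have hIT : I ⊆ T := fun x hx => by simpa using hIG x hx
    rcases Nat.lt_or_ge I.card 3 with hlt | hge
    · have hIF : I ⊆ M.closure Tᶜ := by
        by_contra hIF
        exact hN ⟨by omega, Or.inr hIF⟩
      have := card_le_card (union_subset hIF (M.subset_closure Tᶜ))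
      rw [card_union_of_disjoint (disjoint_of_subset_left hIT disjoint_compl_right),
        h.card_compl] at this
      have := h.card_closure_compl_le
      omega
    · have := h.rk_le
      rw [← eq_of_subset_of_card_le hIT (by rw [h.card_eq]; omega), rk_eq_card_of_indep hI] at this
      omega
  refine Or.inr ⟨s, hsI, hsG, M.indep_subset hI (erase_subset s I), ?_, ?_⟩
  · rw [card_erase_of_mem hsI]
    omega
  by_cases hI2 : I.card ≤ 2
  · exact Or.inl (by rw [card_erase_of_mem hsI]; omega)
  refine Or.inr fun hsub => ?_
  have hIF : I ⊆ M.closure Tᶜ := by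
    rw [← insert_erase hsI]
    exact insert_subset (M.subset_closure _ hsG) hsub
  have := card_le_rk hI hIF
  rw [rk_closure, h.rk_compl] at this
  omega

theorem isMatroidUnion (h : LineConfiguration M T) (hE : M.E = univ) (hl : ∀ x, M.Indep {x}) :
    IsMatroidUnion M (M.truncCollapse Tᶜ hl) (unifOn Tᶜ 1) :=
  isMatroidUnion_unifOn_one (by simp [hE, truncCollapse]) (fun _ hI => hI.1)
    (fun _ hI _ hs => h.indep_insert hl hI hs) fun _ hI => h.truncCollapse_indep_or hl hI

end LineConfiguration

theorem Connected.exists_lineConfiguration [Fintype α] (hM : M.Connected)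
    (hα : Fintype.card α ≤ 5) (hr : 3 ≤ M.rk univ) (hI : ¬ M.Indep I)
    (hIc : I.card ≤ M.rk univ) : ∃ T, LineConfiguration M T := by
  obtain ⟨T, hIT, -, hT⟩ := exists_subsuperset_card_eq (subset_univ I) hIc (M.rk_le_card univ)
  have hTr : M.rk T < T.card := lt_of_le_of_ne (M.rk_le_card T) fun h =>
    hI (M.indep_subset (M.indep_of_card_le_rk h.ge) hIT)
  have hTc : Tᶜ.Nonempty := by
    by_contra h
    rw [not_nonempty_iff_eq_empty, compl_eq_empty_iff] at h
    rw [h] at hTr hT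
    omega
  -- connectivity forces `|Tᶜ| ≥ 2`, hence rank 3 on five elements
  have := hM.rk_univ_lt_rk_add_card_compl (A := T) (card_pos.1 (by omega)) hTc
  rw [Finset.card_compl] at this
  exact ⟨T, hM, by omega, by omega, by omega, by omega⟩

end FinMatroid

open FinMatroid

theorem MatroidIrreducible.connected [Fintype α] {M : FinMatroid α} (hirr : MatroidIrreducible M)
    (hE : M.E = univ) : M.Connected := by
  intro A hA hAc
  by_contra! h
  have hne (B : Finset α) (hB : Bᶜ.Nonempty) : M.restrict B ≠ M := fun h' => by
    obtain ⟨x, hx⟩ := hB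
    have hxE : x ∈ M.E := hE ▸ mem_univ x
    rw [← h'] at hxE
    exact mem_compl.1 hx hxE
  exact (hirr _ _ (isMatroidUnion_restrict_compl hE h)).elim (hne A hAc)
    (hne Aᶜ (by rwa [compl_compl]))

theorem MatroidIrreducible.rk_univ_le_one [Fintype α] {M : FinMatroid α}
    (hirr : MatroidIrreducible M) (hE : M.E = univ) (hl : ∀ x, M.Indep {x})
    (hα : Fintype.card α ≤ 5) : M.rk univ ≤ 1 := by
  by_contra! hr
  have hcard (I : Finset α) (hI : M.Indep I) : I.card ≤ M.rk univ := card_le_rk hI (subset_univ I)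
  have hsplit (N : FinMatroid α) (S : Finset α) (hu : IsMatroidUnion M N (unifOn S 1))
      (hN : ∀ I, N.Indep I → I.card < M.rk univ) : False :=
    (hirr _ _ hu).elim (ne_of_forall_indep_card_lt hN)
      (ne_of_forall_indep_card_lt fun I hI => hI.2.trans_lt hr)
  by_cases huni : ∀ I : Finset α, I.card ≤ M.rk univ → M.Indep I
  · refine hsplit _ _ (isMatroidUnion_unifOn_unifOn (k := M.rk univ - 1) hE fun I => ?_)
      fun I hI => by have := hI.2; omega
    exact ⟨fun hI => by have := hcard I hI; omega, fun hI => huni I (by omega)⟩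
  by_cases h2 : M.rk univ = 2
  · obtain ⟨P, Q, hPQ, hpar⟩ := (parallel_equivalence hl).exists_two_classes_of_card_le_five hα
    exact hsplit _ _ (isMatroidUnion_of_parallel_classes hE hl (fun I hI => h2 ▸ hcard I hI) hPQ
      hpar) fun I hI => by have := hI.2; omega
  push Not at huni
  obtain ⟨X, hXc, hX⟩ := huni
  obtain ⟨T, hT⟩ := (hirr.connected hE).exists_lineConfiguration hα (by omega) hX hXc
  exact hsplit _ _ (hT.isMatroidUnion hE hl) fun I hI => by have := hI.2.1; rw [hT.rk_univ]; omega

theorem irreducible_loopless_le_five_is_uniform_general (n : ℕ)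
    (h5 : n ≤ 5) (M : FinMatroid (Fin n)) (hE : M.E = Finset.univ)
    (hloopless : ∀ i : Fin n, M.Indep {i}) (hirr : MatroidIrreducible M) :
    ∀ I : Finset (Fin n), M.Indep I ↔ I = ∅ ∨ ∃ i : Fin n, I = {i} := by
  have hrk := hirr.rk_univ_le_one hE hloopless (by simpa using h5)
  refine fun I => ⟨fun hI => ?_, ?_⟩
  · exact eq_empty_or_eq_singleton_of_card_le_one ((card_le_rk hI (subset_univ I)).trans hrk)
  · rintro (rfl | ⟨i, rfl⟩)
    exacts [M.indep_empty, hloopless i]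

/-- For `1 ≤ n ≤ 5`, the only loopless matroid on `[n]` irreducible under
matroid union is the uniform matroid `U_{1,[n]}` of rank 1. -/
theorem irreducible_loopless_le_five_is_uniform (n : ℕ) (h1 : 1 ≤ n)
    (h5 : n ≤ 5) (M : FinMatroid (Fin n)) (hE : M.E = Finset.univ)
    (hloopless : ∀ i : Fin n, M.Indep {i}) (hirr : MatroidIrreducible M) :
    ∀ I : Finset (Fin n), M.Indep I ↔ I = ∅ ∨ ∃ i : Fin n, I = {i} :=
  irreducible_loopless_le_five_is_uniform_general n h5 M hE hloopless hirr
end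

section
/- Let π be a set partition of [n] into m parts and let a, b be reals with 0 < a < b < 2a. Then there exists a finite set E with [n] ⊆ E and |E| = n + m, together with m + 2 unit demand valuations u¹, …, u^{m+2} on subsets of E, such that the partition valuation v^{π,a,b} equals the endowment ∂^{E∖[n]}( u¹ * u² * ⋯ * u^{m+2} ) of their merge by E ∖ [n]. In particular, every partition valuation on [n] is the endowment of an OXS valuation (a merge of unit demand valuations) defined on n + m items. -/
open Finset

variable {α : Type*} [DecidableEq α]

/-- A unit demand valuation on ground set `E`: `u T = max_{i ∈ T} w i` for
nonempty `T ⊆ E`, and `u ∅ = 0`, for some nonnegative weights `w`. -/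
def IsUnitDemand (E : Finset α) (u : Finset α → ℝ) : Prop :=
  ∃ w : α → ℝ, (∀ i, 0 ≤ w i) ∧ u ∅ = 0 ∧
    ∀ T : Finset α, T ⊆ E → ∀ hT : T.Nonempty, u T = T.sup' hT w

/-- The iterated merge of a list of valuations (each paired with its ground
set), returning the resulting ground set and valuation. -/
noncomputable def mergeList :
    List (Finset α × (Finset α → ℝ)) → Finset α × (Finset α → ℝ)
  | [] => (∅, fun _ => 0)
  | p :: L =>
    let q := mergeList L
    (p.1 ∪ q.1, mergeVal p.1 q.1 p.2 q.2)

/-! Give each part `p` a fresh item `μ p`, and merge one unit demand bidder of weight `a` and one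
of weight `b - a` on the fresh items `W` with, for every part `p`, a bidder of weight `a` on
`insert (μ p) p`. The merge values a set by its best assignment of items to bidders, one item per
bidder. The `m` items of `W` serve at most `m` bidders worth at most `a` each, so `W` is worth
`a * m`. A nonempty `S ⊆ [n]` may serve the bidders of the parts it meets, freeing fresh items for
the bidders on `W`: if `S` lies in one part this gains exactly one more bidder of weight `a`, and
if `S` meets two parts every bidder is served, for a total of `a * m + b`. -/

theorem le_mergeVal {E1 E2 : Finset α} {u1 u2 : Finset α → ℝ} {S S1 S2 : Finset α}
    (hS : S = S1 ∪ S2) (hd : Disjoint S1 S2) (h1 : S1 ⊆ E1) (h2 : S2 ⊆ E2) :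
    u1 S1 + u2 S2 ≤ mergeVal E1 E2 u1 u2 S := by
  refine le_csSup ?_ ⟨S1, S2, hS, hd, h1, h2, rfl⟩
  refine ((S.powerset ×ˢ S.powerset).image fun q => u1 q.1 + u2 q.2).bddAbove.mono ?_
  rintro _ ⟨T1, T2, rfl, -, -, -, rfl⟩
  simp only [coe_image, coe_product, coe_powerset]
  exact ⟨(T1, T2), ⟨subset_union_left, subset_union_right⟩, rfl⟩

theorem mergeVal_le {E1 E2 : Finset α} {u1 u2 : Finset α → ℝ} {S : Finset α} {c : ℝ}
    (hS : S ⊆ E1 ∪ E2)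
    (h : ∀ S1 S2, S = S1 ∪ S2 → Disjoint S1 S2 → S1 ⊆ E1 → S2 ⊆ E2 → u1 S1 + u2 S2 ≤ c) :
    mergeVal E1 E2 u1 u2 S ≤ c := by
  refine csSup_le ⟨_, S \ E2, S ∩ E2, (sdiff_union_inter S E2).symm,
    disjoint_sdiff_inter S E2, ?_, inter_subset_right, rfl⟩ ?_
  · intro x hx
    have := mem_sdiff.1 hx
    simpa [this.2] using hS this.1
  · rintro _ ⟨S1, S2, hS, hd, h1, h2, rfl⟩
    exact h S1 S2 hS hd h1 h2

theorem mergeVal_of_disjoint {E1 E2 : Finset α} {u1 u2 : Finset α → ℝ} {S : Finset α}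
    (hE : Disjoint E1 E2) (hS : S ⊆ E1 ∪ E2) :
    mergeVal E1 E2 u1 u2 S = u1 (S ∩ E1) + u2 (S ∩ E2) := by
  refine le_antisymm (mergeVal_le hS fun S1 S2 hS hd h1 h2 => ?_) ?_
  · have e1 : S ∩ E1 = S1 := by
      subst hS; ext x; have := @disjoint_left.1 hE x; grind
    have e2 : S ∩ E2 = S2 := by
      subst hS; ext x; have := @disjoint_left.1 hE x; grind
    rw [e1, e2]
  · refine le_mergeVal ?_ (hE.mono inter_subset_right inter_subset_right)
      inter_subset_right inter_subset_right
    rw [← inter_union_distrib_left, inter_eq_left.2 hS]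

theorem mergeVal_mergeVal_le {E1 E2 E3 : Finset α} {u1 u2 u3 : Finset α → ℝ} {T : Finset α}
    {c : ℝ} (hT : T ⊆ E1 ∪ (E2 ∪ E3))
    (h : ∀ A1 A2 B, T = A1 ∪ (A2 ∪ B) → Disjoint A1 (A2 ∪ B) → Disjoint A2 B →
      A1 ⊆ E1 → A2 ⊆ E2 → B ⊆ E3 → u1 A1 + (u2 A2 + u3 B) ≤ c) :
    mergeVal E1 (E2 ∪ E3) u1 (mergeVal E2 E3 u2 u3) T ≤ c := by
  refine mergeVal_le hT fun A1 T' hT hd h1 hT'E => ?_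
  have : mergeVal E2 E3 u2 u3 T' ≤ c - u1 A1 := by
    refine mergeVal_le hT'E fun A2 B hT' hd' h2 h3 => ?_
    subst hT'
    linarith [h A1 A2 B hT hd hd' h1 h2 h3]
  linarith

theorem le_mergeVal_mergeVal {E1 E2 E3 : Finset α} {u1 u2 u3 : Finset α → ℝ}
    {T A1 A2 B : Finset α} (hT : T = A1 ∪ (A2 ∪ B)) (hd : Disjoint A1 (A2 ∪ B))
    (hd' : Disjoint A2 B) (h1 : A1 ⊆ E1) (h2 : A2 ⊆ E2) (h3 : B ⊆ E3) :
    u1 A1 + (u2 A2 + u3 B) ≤ mergeVal E1 (E2 ∪ E3) u1 (mergeVal E2 E3 u2 u3) T := by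
  have := le_mergeVal (u1 := u2) (u2 := u3) rfl hd' h2 h3
  linarith [le_mergeVal (u1 := u1) (u2 := mergeVal E2 E3 u2 u3) hT hd h1
    (union_subset_union h2 h3)]

theorem mem_mergeList_fst {L : List (Finset α × (Finset α → ℝ))} {x : α} :
    x ∈ (mergeList L).1 ↔ ∃ p ∈ L, x ∈ p.1 := by
  induction L with
  | nil => simp [mergeList]
  | cons p L ih => simp [mergeList, ih]

theorem mergeList_snd_eq_sum {L : List (Finset α × (Finset α → ℝ))}
    (hL : L.Pairwise fun p q => Disjoint p.1 q.1) {T : Finset α} (hT : T ⊆ (mergeList L).1) :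
    (mergeList L).2 T = (L.map fun p => p.2 (T ∩ p.1)).sum := by
  induction L generalizing T with
  | nil => simp [mergeList]
  | cons p L ih =>
    obtain ⟨hp, hL⟩ := List.pairwise_cons.1 hL
    have hdisj : Disjoint p.1 (mergeList L).1 := disjoint_left.2 fun x hx hxL => by
      obtain ⟨q, hq, hxq⟩ := mem_mergeList_fst.1 hxL
      exact disjoint_left.1 (hp q hq) hx hxq
    have hrest : (mergeList L).2 (T ∩ (mergeList L).1) = (L.map fun q => q.2 (T ∩ q.1)).sum := by
      rw [ih hL inter_subset_right]
      refine congrArg List.sum (List.map_congr_left fun q hq => ?_)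
      rw [inter_assoc, inter_eq_right.2 fun x hx => mem_mergeList_fst.2 ⟨q, hq, hx⟩]
    change mergeVal p.1 (mergeList L).1 p.2 (mergeList L).2 T = _
    rw [mergeVal_of_disjoint hdisj hT, hrest, List.map_cons, List.sum_cons]

section ConstUnitDemand

variable {β : Type*}

def constUnitDemand (c : ℝ) (T : Finset β) : ℝ := if T.Nonempty then c else 0

theorem isUnitDemand_constUnitDemand [DecidableEq β] (E : Finset β) {c : ℝ} (hc : 0 ≤ c) :
    IsUnitDemand E (constUnitDemand c) :=
  ⟨fun _ => c, fun _ => hc, by simp [constUnitDemand], fun T _ hT => by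
    rw [constUnitDemand, if_pos hT, sup'_const]⟩

theorem constUnitDemand_le {c : ℝ} (hc : 0 ≤ c) (T : Finset β) : constUnitDemand c T ≤ c := by
  unfold constUnitDemand
  split_ifs <;> simp [hc]

theorem constUnitDemand_le_mul_card {a c : ℝ} (ha : 0 ≤ a) (hc : c ≤ a) (T : Finset β) :
    constUnitDemand c T ≤ a * #T := by
  unfold constUnitDemand
  split_ifs with hT
  · exact hc.trans (le_mul_of_one_le_right ha (by exact_mod_cast hT.card_pos))
  · simp [not_nonempty_iff_eq_empty.1 hT]

end ConstUnitDemand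

namespace Finpartition

variable {X : Finset α} (P : Finpartition X) (μ : Finset α → α)

theorem card_filter_inter_nonempty_le_one_of_subset {S p : Finset α} (hp : p ∈ P.parts)
    (hSp : S ⊆ p) : #{q ∈ P.parts | (S ∩ q).Nonempty} ≤ 1 := by
  refine card_le_one.2 fun q hq r hr => ?_
  simp only [mem_filter] at hq hr
  obtain ⟨x, hx⟩ := hq.2
  obtain ⟨y, hy⟩ := hr.2
  rw [mem_inter] at hx hy
  rw [P.eq_of_mem_parts hq.1 hp hx.2 (hSp hx.1), P.eq_of_mem_parts hr.1 hp hy.2 (hSp hy.1)]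

noncomputable def markedPartDemands (a : ℝ) : List (Finset α × (Finset α → ℝ)) :=
  P.parts.toList.map fun p => (insert (μ p) p, constUnitDemand a)

noncomputable def oxsList (a b : ℝ) : List (Finset α × (Finset α → ℝ)) :=
  (P.parts.image μ, constUnitDemand a) :: (P.parts.image μ, constUnitDemand (b - a)) ::
    P.markedPartDemands μ a

variable {P μ} {a b : ℝ}

theorem mergeList_markedPartDemands_fst :
    (mergeList (P.markedPartDemands μ a)).1 = X ∪ P.parts.image μ := by
  ext x
  simp only [mem_mergeList_fst, markedPartDemands, List.mem_map, mem_toList, mem_union,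
    mem_image]
  constructor
  · rintro ⟨_, ⟨p, hp, rfl⟩, hx⟩
    rcases mem_insert.1 hx with rfl | hx
    · exact Or.inr ⟨p, hp, rfl⟩
    · exact Or.inl (P.le hp hx)
  · rintro (hx | ⟨p, hp, rfl⟩)
    · obtain ⟨p, hp, hxp⟩ := P.exists_mem hx
      exact ⟨_, ⟨p, hp, rfl⟩, mem_insert_of_mem hxp⟩
    · exact ⟨_, ⟨p, hp, rfl⟩, mem_insert_self _ _⟩

theorem mergeList_oxsList_fst : (mergeList (P.oxsList μ a b)).1 = X ∪ P.parts.image μ := by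
  change _ ∪ (_ ∪ (mergeList (P.markedPartDemands μ a)).1) = _
  rw [mergeList_markedPartDemands_fst]
  grind

theorem isUnitDemand_of_mem_oxsList (ha : 0 ≤ a) (hab : a ≤ b) {q} (hq : q ∈ P.oxsList μ a b) :
    IsUnitDemand q.1 q.2 := by
  simp only [oxsList, markedPartDemands, List.mem_cons, List.mem_map] at hq
  rcases hq with rfl | rfl | ⟨p, -, rfl⟩
  · exact isUnitDemand_constUnitDemand _ ha
  · exact isUnitDemand_constUnitDemand _ (sub_nonneg.2 hab)
  · exact isUnitDemand_constUnitDemand _ ha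

theorem pairwise_disjoint_markedPartDemands (hμ : Set.InjOn μ P.parts)
    (hμX : ∀ p ∈ P.parts, μ p ∉ X) :
    (P.markedPartDemands μ a).Pairwise fun p q => Disjoint p.1 q.1 := by
  refine List.pairwise_map.2 (P.parts.nodup_toList.pairwise_of_forall_ne fun p hp q hq hpq => ?_)
  rw [mem_toList] at hp hq
  have hμpq : μ p ≠ μ q := fun h => hpq (hμ hp hq h)
  simp only [disjoint_insert_left, disjoint_insert_right, mem_insert, not_or]
  exact ⟨⟨hμpq.symm, fun h => hμX q hq (P.le hp h)⟩, fun h => hμX p hp (P.le hq h),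
    P.disjoint hp hq hpq⟩

theorem mergeList_markedPartDemands_snd (hμ : Set.InjOn μ P.parts)
    (hμX : ∀ p ∈ P.parts, μ p ∉ X) {B : Finset α} (hB : B ⊆ X ∪ P.parts.image μ) :
    (mergeList (P.markedPartDemands μ a)).2 B =
      a * #{p ∈ P.parts | (B ∩ insert (μ p) p).Nonempty} := by
  rw [mergeList_snd_eq_sum (pairwise_disjoint_markedPartDemands hμ hμX)
    (by rwa [mergeList_markedPartDemands_fst]), markedPartDemands, List.map_map, sum_map_toList]
  simp [constUnitDemand, Function.comp_def, sum_ite, mul_comm]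

theorem card_filter_inter_insert_nonempty_le (hμ : Set.InjOn μ P.parts) {S B : Finset α}
    (hB : B ∩ X ⊆ S) :
    #{p ∈ P.parts | (B ∩ insert (μ p) p).Nonempty} ≤
      #(B ∩ P.parts.image μ) + #{p ∈ P.parts | (S ∩ p).Nonempty} := by
  calc #{p ∈ P.parts | (B ∩ insert (μ p) p).Nonempty}
      ≤ #{p ∈ P.parts | μ p ∈ B ∨ (S ∩ p).Nonempty} := by
        refine card_le_card fun p hp => ?_
        obtain ⟨hp, x, hx⟩ := mem_filter.1 hp
        obtain ⟨hxB, hx⟩ := mem_inter.1 hx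
        refine mem_filter.2 ⟨hp, ?_⟩
        rcases mem_insert.1 hx with rfl | hx
        · exact Or.inl hxB
        · exact Or.inr ⟨x, mem_inter.2 ⟨hB (mem_inter.2 ⟨hxB, P.le hp hx⟩), hx⟩⟩
    _ ≤ #{p ∈ P.parts | μ p ∈ B} + #{p ∈ P.parts | (S ∩ p).Nonempty} := by
        rw [filter_or]
        exact card_union_le _ _
    _ ≤ #(B ∩ P.parts.image μ) + #{p ∈ P.parts | (S ∩ p).Nonempty} := by
        gcongr
        rw [← card_image_of_injOn (hμ.mono (filter_subset _ _))]
        refine card_le_card fun x hx => ?_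
        obtain ⟨p, hp, rfl⟩ := mem_image.1 hx
        exact mem_inter.2 ⟨(mem_filter.1 hp).2, mem_image_of_mem μ (mem_filter.1 hp).1⟩

theorem card_filter_sdiff_inter_insert_nonempty (hμX : ∀ p ∈ P.parts, μ p ∉ X)
    {S D : Finset α} (hD : D ⊆ P.parts.image μ)
    (hDS : ∀ p ∈ P.parts, μ p ∈ D → (S ∩ p).Nonempty) :
    #{p ∈ P.parts | ((S ∪ P.parts.image μ) \ D ∩ insert (μ p) p).Nonempty} = #P.parts := by
  rw [filter_true_of_mem fun p hp => ?_]
  by_cases hpD : μ p ∈ D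
  · obtain ⟨x, hx⟩ := hDS p hp hpD
    obtain ⟨hxS, hxp⟩ := mem_inter.1 hx
    have hxD : x ∉ D := fun hxD => by
      obtain ⟨q, hq, rfl⟩ := mem_image.1 (hD hxD)
      exact hμX q hq (P.le hp hxp)
    exact ⟨x, mem_inter.2 ⟨mem_sdiff.2 ⟨mem_union_left _ hxS, hxD⟩, mem_insert_of_mem hxp⟩⟩
  · exact ⟨μ p, mem_inter.2 ⟨mem_sdiff.2 ⟨mem_union_right _ (mem_image_of_mem μ hp), hpD⟩,
      mem_insert_self _ _⟩⟩

theorem mergeList_oxsList_snd_le (hμ : Set.InjOn μ P.parts) (hμX : ∀ p ∈ P.parts, μ p ∉ X)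
    {T : Finset α} {c : ℝ} (hT : T ⊆ X ∪ P.parts.image μ)
    (h : ∀ A1 A2 B, T = A1 ∪ (A2 ∪ B) → Disjoint A1 (A2 ∪ B) → Disjoint A2 B →
      A1 ⊆ P.parts.image μ → A2 ⊆ P.parts.image μ → B ⊆ X ∪ P.parts.image μ →
      constUnitDemand a A1 + (constUnitDemand (b - a) A2 +
        a * #{p ∈ P.parts | (B ∩ insert (μ p) p).Nonempty}) ≤ c) :
    (mergeList (P.oxsList μ a b)).2 T ≤ c := by
  change mergeVal _ (_ ∪ (mergeList (P.markedPartDemands μ a)).1) _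
    (mergeVal _ (mergeList (P.markedPartDemands μ a)).1 _ _) T ≤ c
  rw [mergeList_markedPartDemands_fst]
  refine mergeVal_mergeVal_le (hT.trans (by grind)) fun A1 A2 B hT hd hd' h1 h2 hB => ?_
  rw [mergeList_markedPartDemands_snd hμ hμX hB]
  exact h A1 A2 B hT hd hd' h1 h2 hB

theorem le_mergeList_oxsList_snd (hμ : Set.InjOn μ P.parts) (hμX : ∀ p ∈ P.parts, μ p ∉ X)
    {T A1 A2 B : Finset α} (hT : T = A1 ∪ (A2 ∪ B)) (hd : Disjoint A1 (A2 ∪ B))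
    (hd' : Disjoint A2 B) (h1 : A1 ⊆ P.parts.image μ) (h2 : A2 ⊆ P.parts.image μ)
    (hB : B ⊆ X ∪ P.parts.image μ) :
    constUnitDemand a A1 + (constUnitDemand (b - a) A2 +
      a * #{p ∈ P.parts | (B ∩ insert (μ p) p).Nonempty}) ≤ (mergeList (P.oxsList μ a b)).2 T := by
  change _ ≤ mergeVal _ (_ ∪ (mergeList (P.markedPartDemands μ a)).1) _
    (mergeVal _ (mergeList (P.markedPartDemands μ a)).1 _ _) T
  rw [← mergeList_markedPartDemands_snd hμ hμX hB]
  exact le_mergeVal_mergeVal hT hd hd' h1 h2 (by rwa [mergeList_markedPartDemands_fst])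

theorem mergeList_oxsList_snd_le_card_add (hμ : Set.InjOn μ P.parts)
    (hμX : ∀ p ∈ P.parts, μ p ∉ X) (ha : 0 ≤ a) (hb : b ≤ 2 * a) {S : Finset α} (hS : S ⊆ X) :
    (mergeList (P.oxsList μ a b)).2 (S ∪ P.parts.image μ) ≤
      a * (#P.parts + #{p ∈ P.parts | (S ∩ p).Nonempty}) := by
  refine mergeList_oxsList_snd_le hμ hμX (union_subset_union_left hS)
    fun A1 A2 B hT hd hd' h1 h2 _ => ?_
  have hBX : B ∩ X ⊆ S := fun x hx => by
    obtain ⟨hxB, hxX⟩ := mem_inter.1 hx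
    have hxT : x ∈ S ∪ P.parts.image μ := hT ▸ mem_union_right _ (mem_union_right _ hxB)
    refine (mem_union.1 hxT).resolve_right fun hxW => ?_
    obtain ⟨p, hp, rfl⟩ := mem_image.1 hxW
    exact hμX p hp hxX
  have hmarkers : #A1 + (#A2 + #(B ∩ P.parts.image μ)) ≤ #P.parts := by
    rw [← card_union_of_disjoint (hd'.mono_right inter_subset_left),
      ← card_union_of_disjoint (hd.mono_right (union_subset_union_right inter_subset_left)),
      ← card_image_of_injOn hμ]
    exact card_le_card (union_subset h1 (union_subset h2 inter_subset_right))
  have hcount : (#A1 + (#A2 + #{p ∈ P.parts | (B ∩ insert (μ p) p).Nonempty}) : ℝ) ≤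
      #P.parts + #{p ∈ P.parts | (S ∩ p).Nonempty} := by
    have := card_filter_inter_insert_nonempty_le hμ hBX
    exact_mod_cast (by omega)
  have e1 := constUnitDemand_le_mul_card ha le_rfl A1
  have e2 := constUnitDemand_le_mul_card ha (show b - a ≤ a by linarith) A2
  linarith [mul_le_mul_of_nonneg_left hcount ha]

theorem mergeList_oxsList_snd_le_add (hμ : Set.InjOn μ P.parts) (hμX : ∀ p ∈ P.parts, μ p ∉ X)
    (ha : 0 ≤ a) (hab : a ≤ b) {T : Finset α} (hT : T ⊆ X ∪ P.parts.image μ) :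
    (mergeList (P.oxsList μ a b)).2 T ≤ a * #P.parts + b := by
  refine mergeList_oxsList_snd_le hμ hμX hT fun A1 A2 B _ _ _ _ _ _ => ?_
  have e1 := constUnitDemand_le ha A1
  have e2 := constUnitDemand_le (sub_nonneg.2 hab) A2
  have e3 : (#{p ∈ P.parts | (B ∩ insert (μ p) p).Nonempty} : ℝ) ≤ #P.parts := by
    exact_mod_cast card_filter_le _ _
  linarith [mul_le_mul_of_nonneg_left e3 ha]

theorem le_mergeList_oxsList_snd_union (hμ : Set.InjOn μ P.parts)
    (hμX : ∀ p ∈ P.parts, μ p ∉ X) {S A1 A2 : Finset α} (hS : S ⊆ X)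
    (h1 : A1 ⊆ P.parts.image μ) (h2 : A2 ⊆ P.parts.image μ) (hd : Disjoint A1 A2)
    (hmet : ∀ p ∈ P.parts, μ p ∈ A1 ∪ A2 → (S ∩ p).Nonempty) :
    constUnitDemand a A1 + (constUnitDemand (b - a) A2 + a * #P.parts) ≤
      (mergeList (P.oxsList μ a b)).2 (S ∪ P.parts.image μ) := by
  have hA : A1 ∪ A2 ⊆ S ∪ P.parts.image μ := (union_subset h1 h2).trans subset_union_right
  have key := le_mergeList_oxsList_snd (a := a) (b := b) hμ hμX
    (B := (S ∪ P.parts.image μ) \ (A1 ∪ A2))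
    (by rw [← union_assoc, union_sdiff_of_subset hA])
    (disjoint_union_right.2 ⟨hd, disjoint_sdiff.mono_left subset_union_left⟩)
    (disjoint_sdiff.mono_left subset_union_right) h1 h2
    (sdiff_subset.trans (union_subset_union_left hS))
  rwa [card_filter_sdiff_inter_insert_nonempty hμX (union_subset h1 h2) hmet] at key

theorem mergeList_oxsList_snd_image (hμ : Set.InjOn μ P.parts) (hμX : ∀ p ∈ P.parts, μ p ∉ X)
    (ha : 0 ≤ a) (hb : b ≤ 2 * a) :
    (mergeList (P.oxsList μ a b)).2 (P.parts.image μ) = a * #P.parts := by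
  refine le_antisymm ?_ ?_
  · simpa using mergeList_oxsList_snd_le_card_add hμ hμX ha hb (empty_subset X)
  · simpa [constUnitDemand] using le_mergeList_oxsList_snd_union (a := a) (b := b) hμ hμX
      (empty_subset X) (empty_subset _) (empty_subset _) (disjoint_empty_left _) (by simp)

theorem mergeList_oxsList_snd_union_of_subset (hμ : Set.InjOn μ P.parts)
    (hμX : ∀ p ∈ P.parts, μ p ∉ X) (ha : 0 ≤ a) (hb : b ≤ 2 * a) {S p : Finset α}
    (hS : S.Nonempty) (hp : p ∈ P.parts) (hSp : S ⊆ p) :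
    (mergeList (P.oxsList μ a b)).2 (S ∪ P.parts.image μ) = a * (#P.parts + 1) := by
  have hSX : S ⊆ X := hSp.trans (P.le hp)
  have hmet : (#{q ∈ P.parts | (S ∩ q).Nonempty} : ℝ) ≤ 1 := by
    exact_mod_cast P.card_filter_inter_nonempty_le_one_of_subset hp hSp
  have upper := mergeList_oxsList_snd_le_card_add hμ hμX ha hb hSX
  have lower := le_mergeList_oxsList_snd_union (a := a) (b := b) hμ hμX (A2 := ∅) hSX
    (singleton_subset_iff.2 (mem_image_of_mem μ hp)) (empty_subset _)
    (disjoint_empty_right _) fun r hr hrA => by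
      rw [union_empty, mem_singleton] at hrA
      rw [hμ hr hp hrA, inter_eq_left.2 hSp]
      exact hS
  simp only [constUnitDemand, singleton_nonempty, if_true, Finset.not_nonempty_empty,
    if_false] at lower
  linarith [mul_le_mul_of_nonneg_left hmet ha]

theorem mergeList_oxsList_snd_union_of_ne (hμ : Set.InjOn μ P.parts)
    (hμX : ∀ p ∈ P.parts, μ p ∉ X) (ha : 0 ≤ a) (hab : a ≤ b) {S p q : Finset α} (hS : S ⊆ X)
    (hp : p ∈ P.parts) (hq : q ∈ P.parts) (hpq : p ≠ q) (hSp : (S ∩ p).Nonempty)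
    (hSq : (S ∩ q).Nonempty) :
    (mergeList (P.oxsList μ a b)).2 (S ∪ P.parts.image μ) = a * #P.parts + b := by
  have lower := le_mergeList_oxsList_snd_union (a := a) (b := b) hμ hμX hS
    (singleton_subset_iff.2 (mem_image_of_mem μ hp))
    (singleton_subset_iff.2 (mem_image_of_mem μ hq))
    (disjoint_singleton.2 fun h => hpq (hμ hp hq h)) fun r hr hrA => by
      rcases mem_union.1 hrA with hrA | hrA <;> rw [mem_singleton] at hrA
      · rwa [hμ hr hp hrA]
      · rwa [hμ hr hq hrA]
  simp only [constUnitDemand, singleton_nonempty, if_true] at lower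
  linarith [mergeList_oxsList_snd_le_add hμ hμX ha hab (union_subset_union_left hS)]

theorem partitionVal_eq_mergeList_oxsList_snd_sub (hμ : Set.InjOn μ P.parts)
    (hμX : ∀ p ∈ P.parts, μ p ∉ X) (ha : 0 ≤ a) (hab : a ≤ b) (hb : b ≤ 2 * a)
    {S : Finset α} (hS : S ⊆ X) :
    partitionVal P a b S = (mergeList (P.oxsList μ a b)).2 (S ∪ P.parts.image μ) -
      (mergeList (P.oxsList μ a b)).2 (P.parts.image μ) := by
  rw [mergeList_oxsList_snd_image hμ hμX ha hb]
  rcases S.eq_empty_or_nonempty with rfl | ⟨x, hx⟩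
  · simp [partitionVal, mergeList_oxsList_snd_image hμ hμX ha hb]
  rw [partitionVal, if_neg (ne_empty_of_mem hx)]
  split_ifs with hone
  · obtain ⟨p, hp, hSp⟩ := hone
    rw [mergeList_oxsList_snd_union_of_subset hμ hμX ha hb ⟨x, hx⟩ hp hSp]
    ring
  · obtain ⟨p, hp, hxp⟩ := P.exists_mem (hS hx)
    obtain ⟨y, hyS, hyp⟩ := not_subset.1 fun hsub => hone ⟨p, hp, hsub⟩
    obtain ⟨q, hq, hyq⟩ := P.exists_mem (hS hyS)
    rw [mergeList_oxsList_snd_union_of_ne hμ hμX ha hab hS hp hq (fun h => hyp (h ▸ hyq))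
      ⟨x, mem_inter.2 ⟨hx, hxp⟩⟩ ⟨y, mem_inter.2 ⟨hyS, hyq⟩⟩]
    ring

end Finpartition

/-- Every partition valuation on `[n]` (with `m` parts) is the endowment, by
the `m` extra items, of a merge of `m + 2` unit demand valuations defined on
a ground set of `n + m` items. -/
theorem partitionVal_endowment_of_oxs (n : ℕ)
    (π : Finpartition (Finset.range n)) (a b : ℝ)
    (ha : 0 < a) (hab : a < b) (hb : b < 2 * a) :
    ∃ E : Finset ℕ, Finset.range n ⊆ E ∧ E.card = n + π.parts.card ∧
      ∃ L : List (Finset ℕ × (Finset ℕ → ℝ)),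
        L.length = π.parts.card + 2 ∧
        (∀ p ∈ L, p.1 ⊆ E ∧ IsUnitDemand p.1 p.2) ∧
        (mergeList L).1 = E ∧
        ∀ S : Finset ℕ, S ⊆ Finset.range n →
          partitionVal π a b S =
            (mergeList L).2 (S ∪ (E \ Finset.range n)) -
              (mergeList L).2 (E \ Finset.range n) := by
  set μ : Finset ℕ → ℕ := fun p => n + π.parts.toList.idxOf p
  have hμ : Set.InjOn μ π.parts := fun p hp q _ h =>
    (List.idxOf_inj (mem_toList.2 hp)).1 (Nat.add_left_cancel h)
  have hμX : ∀ p ∈ π.parts, μ p ∉ range n := by simp [μ]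
  have hdisj : Disjoint (range n) (π.parts.image μ) := disjoint_right.2 fun x hx => by
    obtain ⟨p, hp, rfl⟩ := mem_image.1 hx
    exact hμX p hp
  refine ⟨range n ∪ π.parts.image μ, subset_union_left, ?_, π.oxsList μ a b, ?_,
    fun q hq => ⟨?_, π.isUnitDemand_of_mem_oxsList ha.le hab.le hq⟩,
    Finpartition.mergeList_oxsList_fst, fun S hS => ?_⟩
  · rw [card_union_of_disjoint hdisj, card_range, card_image_of_injOn hμ]
  · simp [Finpartition.oxsList, Finpartition.markedPartDemands]
  · rw [← Finpartition.mergeList_oxsList_fst (μ := μ) (a := a) (b := b)]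
    exact fun x hx => mem_mergeList_fst.2 ⟨q, hq, hx⟩
  · rw [union_sdiff_cancel_left hdisj]
    exact Finpartition.partitionVal_eq_mergeList_oxsList_snd_sub hμ hμX ha.le hab.le hb.le hS
end
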